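/- arXiv:2212.08949 — 10 statements merged into one kernel-verified Lean document; each statement's English description precedes it below -/
import Mathlib

section
/- Let (Ω, P) be a probability space, σ > 0, a < 0, h > 0, and let N, M ≥ 1 be integers; set T = N·h and B = M·N. Let x_1, …, x_M be real-valued stochastic processes on Ω indexed by t ∈ [0, T] such that each x_i(kh) is measurable and lies in L⁴(P) for 0 ≤ k ≤ N−1, the random vectors (x_i(0), x_i(h), …, x_i((N−1)h)), i = 1, …, M, are mutually independent, and for each i the moment identities E[x_i(t)²] = (σ²/(2a))(e^{2at} − 1) for all t ∈ [0, T] and E[x_i(s)² x_i(t)²] = (σ⁴/(4a²))(e^{2as} − 1) e^{2at} [(e^{−2as} − e^{−2at}) + 3(1 − e^{−2as})] for all 0 ≤ s ≤ t ≤ T hold. Define the Monte-Carlo estimator V̂_M(h) = (1/M) Σ_{i=1}^{M} Σ_{k=0}^{N−1} h · x_i(kh)² and V_T = (σ²/(2a)) ((e^{2aT} − 1)/(2a) − T). Then E[(V̂_M(h) − V_T)²] = E1(h, T, a) + E2(h, T, a)/B, where E1(h,T,a) = σ⁴(−2ah + e^{2ah} − 1)²(e^{2aT} − 1)² / (16a⁴(e^{2ah}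 − 1)²) and E2(h,T,a) = σ⁴T[h(e^{2aT} − 1)(4e^{2ah} + e^{2aT} + 1) − (e^{2ah} − 1)(e^{2ah} + 4e^{2aT} + 1)T] / (2a²(e^{2ah} − 1)²). -/
/-!
Write `Y_i = ∑_{k<N} h x_i(kh)²` for the return of trajectory `i`. By independence of the
trajectories the mean-squared error of their average splits as `(E Y − V_T)² + Var Y / M`.
With `q = e^{2ah}` and `c = σ²/(2a)`, the second moments make `E Y = h c ∑_{k<N} (q^k − 1)` a
geometric sum, whose distance to `V_T` is the square root of `E1`. The second and fourth moments
give `Cov(x(kh)², x(lh)²) = 2c² (q^{k+l} − 2q^{max k l} + q^{|k−l|})`, and the double sum of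
these over the grid has a closed form (by induction on `N`) which turns `Var Y / M` into `E2 / B`.
-/

open MeasureTheory ProbabilityTheory Finset

section Algebra

variable {R : Type*} [CommRing R]

theorem sum_range_pow_max_sub_min_row (q : R) (n : ℕ) :
    ∑ k ∈ range n, (q ^ (k + n) - 2 * q ^ max k n + q ^ (max k n - min k n)) =
      (q ^ n + q) * ∑ k ∈ range n, q ^ k - 2 * n * q ^ n := by
  have reflect : ∑ k ∈ range n, q ^ (n - k) = q * ∑ k ∈ range n, q ^ k := by
    rw [mul_sum, ← sum_range_reflect]
    refine sum_congr rfl fun k hk => ?_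
    rw [← pow_succ']
    congr 1
    have := mem_range.mp hk
    omega
  rw [← sub_eq_zero]
  calc _ = ∑ k ∈ range n, (q ^ k * q ^ n - 2 * q ^ n + q ^ (n - k)) -
        ((q ^ n + q) * ∑ k ∈ range n, q ^ k - 2 * n * q ^ n) := by
        congr 1
        refine sum_congr rfl fun k hk => ?_
        have hkn := (mem_range.mp hk).le
        rw [max_eq_right hkn, min_eq_left hkn, pow_add]
    _ = 0 := by
        rw [sum_add_distrib, sum_sub_distrib, ← sum_mul, sum_const, card_range, nsmul_eq_mul,
          reflect]
        ring

theorem sq_sub_one_mul_sum_range_sum_range_pow_max (q : R) (N : ℕ) :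
    (q - 1) ^ 2 * ∑ k ∈ range N, ∑ l ∈ range N,
        (q ^ (k + l) - 2 * q ^ max k l + q ^ (max k l - min k l)) =
      (q ^ N - 1) * (4 * q + q ^ N + 1) - N * (q - 1) * (q + 4 * q ^ N + 1) := by
  induction N with
  | zero => simp
  | succ n ih =>
    have column := sum_range_pow_max_sub_min_row q n
    have row : ∑ l ∈ range n, (q ^ (n + l) - 2 * q ^ max n l + q ^ (max n l - min n l)) =
        (q ^ n + q) * ∑ k ∈ range n, q ^ k - 2 * n * q ^ n := by
      simpa only [add_comm, max_comm, min_comm] using column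
    rw [sum_range_succ, sum_range_succ, sum_congr rfl fun k _ => sum_range_succ _ n,
      sum_add_distrib, column, row, max_self, min_self, Nat.sub_self]
    push_cast
    linear_combination ih + 2 * (q ^ n + q) * (q - 1) * geom_sum_mul q n

end Algebra

theorem Real.exp_two_mul_nat_mul (a h : ℝ) (k : ℕ) :
    Real.exp (2 * a * (k * h)) = Real.exp (2 * a * h) ^ k := by
  rw [← Real.exp_nat_mul]
  ring_nf

theorem Real.exp_neg_two_mul_nat_mul (a h : ℝ) (k : ℕ) :
    Real.exp (-2 * a * (k * h)) = (Real.exp (2 * a * h) ^ k)⁻¹ := by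
  rw [← Real.exp_two_mul_nat_mul, ← Real.exp_neg]
  ring_nf

theorem cast_mul_le_cast_mul_of_lt {h : ℝ} (hh : 0 ≤ h) {k N : ℕ} (hk : k < N) :
    (k : ℝ) * h ≤ N * h := by
  gcongr

/-- The moments of the Langevin process `dx = a x dt + σ dw`, `x 0 = 0`, on `[0, T]`. -/
def LangevinSecondMoments {Ω : Type*} [MeasurableSpace Ω] (P : Measure Ω) (σ a T : ℝ)
    (x : ℝ → Ω → ℝ) : Prop :=
  ∀ t, 0 ≤ t → t ≤ T →
    ∫ ω, x t ω ^ 2 ∂P = σ ^ 2 / (2 * a) * (Real.exp (2 * a * t) - 1)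

def LangevinFourthMoments {Ω : Type*} [MeasurableSpace Ω] (P : Measure Ω) (σ a T : ℝ)
    (x : ℝ → Ω → ℝ) : Prop :=
  ∀ s t, 0 ≤ s → s ≤ t → t ≤ T →
    ∫ ω, x s ω ^ 2 * x t ω ^ 2 ∂P =
      σ ^ 4 / (4 * a ^ 2) * (Real.exp (2 * a * s) - 1) * Real.exp (2 * a * t) *
        ((Real.exp (-2 * a * s) - Real.exp (-2 * a * t)) + 3 * (1 - Real.exp (-2 * a * s)))

section Moments

variable {Ω : Type*} [MeasurableSpace Ω] {P : Measure Ω} {σ a h T : ℝ} {x : ℝ → Ω → ℝ}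
  {N : ℕ}

theorem MeasureTheory.MemLp.sq_of_four {f : Ω → ℝ} (hf : MemLp f 4 P) :
    MemLp (fun ω => f ω ^ 2) 2 P := by
  refine (memLp_two_iff_integrable_sq (hf.1.pow 2)).2 ?_
  have h4 : Even 4 := by decide
  simpa [← pow_mul, h4.pow_abs] using hf.integrable_norm_pow (p := 4) (by norm_num)

theorem memLp_sum_range_grid (hx : ∀ k < N, MemLp (x (k * h)) 4 P) :
    MemLp (fun ω => ∑ k ∈ range N, h * x (k * h) ω ^ 2) 2 P :=
  memLp_finsetSum _ fun k hk => (hx k (mem_range.mp hk)).sq_of_four.const_mul h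

theorem LangevinSecondMoments.integral_sq_grid (hx : LangevinSecondMoments P σ a T x)
    (hh : 0 ≤ h) {k : ℕ} (hk : k * h ≤ T) :
    ∫ ω, x (k * h) ω ^ 2 ∂P = σ ^ 2 / (2 * a) * (Real.exp (2 * a * h) ^ k - 1) := by
  rw [hx _ (by positivity) hk, Real.exp_two_mul_nat_mul]

variable [IsProbabilityMeasure P]

theorem integral_sub_const_sq {X : Ω → ℝ} (hX : MemLp X 2 P) (c : ℝ) :
    ∫ ω, (X ω - c) ^ 2 ∂P = Var[X; P] + (P[X] - c) ^ 2 := by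
  have hXc : MemLp (fun ω => X ω - c) 2 P := hX.sub (memLp_const c)
  rw [← variance_sub_const hX.1 c, variance_eq_sub hXc,
    integral_sub (hX.integrable one_le_two) (integrable_const c), integral_const]
  simp

theorem integral_average_sub_const_sq {ι : Type*} [Fintype ι] [Nonempty ι]
    {Y : ι → Ω → ℝ} (hY : ∀ i, MemLp (Y i) 2 P) (hindep : Pairwise fun i j => Y i ⟂ᵢ[P] Y j)
    {m v : ℝ} (hmean : ∀ i, P[Y i] = m) (hvar : ∀ i, Var[Y i; P] = v) (c : ℝ) :
    ∫ ω, (1 / (Fintype.card ι : ℝ) * ∑ i, Y i ω - c) ^ 2 ∂P =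
      (m - c) ^ 2 + v / Fintype.card ι := by
  have hn : (Fintype.card ι : ℝ) ≠ 0 := Nat.cast_ne_zero.mpr Fintype.card_ne_zero
  have hS : (fun ω => ∑ i, Y i ω) = ∑ i, Y i := by ext; simp
  have hsum : MemLp (fun ω => ∑ i, Y i ω) 2 P := memLp_finsetSum _ fun i _ => hY i
  have hvar_sum : Var[fun ω => ∑ i, Y i ω; P] = Fintype.card ι * v := by
    rw [hS, IndepFun.variance_sum (fun i _ => hY i) fun i _ j _ hij => hindep hij]
    simp [hvar]
  have hmean_sum : ∫ ω, ∑ i, Y i ω ∂P = Fintype.card ι * m := by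
    rw [integral_finsetSum _ fun i _ => (hY i).integrable one_le_two]
    simp [hmean]
  rw [integral_sub_const_sq (hsum.const_mul _), variance_const_mul, integral_const_mul,
    hvar_sum, hmean_sum]
  field_simp
  ring

theorem covariance_sq_grid_of_le (h2 : LangevinSecondMoments P σ a T x)
    (h4 : LangevinFourthMoments P σ a T x) (hh : 0 ≤ h) {k l : ℕ}
    (hk : MemLp (x (k * h)) 4 P) (hl : MemLp (x (l * h)) 4 P) (hkl : k ≤ l) (hlT : l * h ≤ T) :
    cov[fun ω => x (k * h) ω ^ 2, fun ω => x (l * h) ω ^ 2; P] =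
      2 * (σ ^ 2 / (2 * a)) ^ 2 * (Real.exp (2 * a * h) ^ (k + l) -
        2 * Real.exp (2 * a * h) ^ l + Real.exp (2 * a * h) ^ (l - k)) := by
  have hkl' : (k : ℝ) * h ≤ l * h := by gcongr
  have hkT := hkl'.trans hlT
  rw [covariance_eq_sub hk.sq_of_four hl.sq_of_four]
  simp only [Pi.mul_apply]
  rw [h4 _ _ (by positivity) hkl' hlT, h2.integral_sq_grid hh hkT, h2.integral_sq_grid hh hlT,
    Real.exp_neg_two_mul_nat_mul, Real.exp_neg_two_mul_nat_mul, Real.exp_two_mul_nat_mul,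
    Real.exp_two_mul_nat_mul, pow_sub₀ _ (Real.exp_pos _).ne' hkl, pow_add]
  have : Real.exp (2 * a * h) ^ k ≠ 0 := by positivity
  field_simp
  ring

theorem covariance_sq_grid (h2 : LangevinSecondMoments P σ a T x)
    (h4 : LangevinFourthMoments P σ a T x) (hh : 0 ≤ h) {k l : ℕ}
    (hk : MemLp (x (k * h)) 4 P) (hl : MemLp (x (l * h)) 4 P) (hkT : k * h ≤ T)
    (hlT : l * h ≤ T) :
    cov[fun ω => x (k * h) ω ^ 2, fun ω => x (l * h) ω ^ 2; P] =
      2 * (σ ^ 2 / (2 * a)) ^ 2 * (Real.exp (2 * a * h) ^ (k + l) -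
        2 * Real.exp (2 * a * h) ^ max k l + Real.exp (2 * a * h) ^ (max k l - min k l)) := by
  rcases le_total k l with hkl | hlk
  · rw [covariance_sq_grid_of_le h2 h4 hh hk hl hkl hlT, max_eq_right hkl, min_eq_left hkl]
  · rw [covariance_comm, covariance_sq_grid_of_le h2 h4 hh hl hk hlk hkT, max_eq_left hlk,
      min_eq_right hlk, Nat.add_comm]

theorem integral_sum_range_grid
    (h2 : LangevinSecondMoments P σ a (N * h) x) (hh : 0 ≤ h)
    (hx : ∀ k < N, MemLp (x (k * h)) 4 P) :
    ∫ ω, ∑ k ∈ range N, h * x (k * h) ω ^ 2 ∂P =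
      h * (σ ^ 2 / (2 * a)) * ∑ k ∈ range N, (Real.exp (2 * a * h) ^ k - 1) := by
  rw [integral_finsetSum _ fun k hk =>
    ((hx k (mem_range.mp hk)).sq_of_four.integrable one_le_two).const_mul h, mul_assoc, mul_sum,
    mul_sum]
  refine sum_congr rfl fun k hk => ?_
  rw [integral_const_mul,
    h2.integral_sq_grid hh (cast_mul_le_cast_mul_of_lt hh (mem_range.mp hk))]

theorem variance_sum_range_grid (h2 : LangevinSecondMoments P σ a (N * h) x)
    (h4 : LangevinFourthMoments P σ a (N * h) x) (hh : 0 ≤ h)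
    (hx : ∀ k < N, MemLp (x (k * h)) 4 P) :
    Var[fun ω => ∑ k ∈ range N, h * x (k * h) ω ^ 2; P] =
      2 * (h * (σ ^ 2 / (2 * a))) ^ 2 * ∑ k ∈ range N, ∑ l ∈ range N,
        (Real.exp (2 * a * h) ^ (k + l) - 2 * Real.exp (2 * a * h) ^ max k l +
          Real.exp (2 * a * h) ^ (max k l - min k l)) := by
  rw [variance_fun_sum' fun k hk => (hx k (mem_range.mp hk)).sq_of_four.const_mul h, mul_sum]
  refine sum_congr rfl fun k hk => ?_
  rw [mul_sum]
  refine sum_congr rfl fun l hl => ?_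
  have hk' := mem_range.mp hk
  have hl' := mem_range.mp hl
  rw [covariance_const_mul_left, covariance_const_mul_right,
    covariance_sq_grid h2 h4 hh (hx k hk') (hx l hl') (cast_mul_le_cast_mul_of_lt hh hk')
      (cast_mul_le_cast_mul_of_lt hh hl')]
  ring

end Moments

theorem stmt_0_general
    {Ω : Type*} [MeasurableSpace Ω] (P : Measure Ω) [IsProbabilityMeasure P]
    (σ a h : ℝ) (ha : a < 0) (hh : 0 < h)
    (N M : ℕ) (hN : 1 ≤ N) (hM : 1 ≤ M)
    (x : Fin M → ℝ → Ω → ℝ)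
    (hL4 : ∀ (i : Fin M) (k : ℕ), k < N → MemLp (x i (k * h)) 4 P)
    (hindep : iIndepFun
      (fun (i : Fin M) (ω : Ω) => fun k : Fin N => x i (k * h) ω) P)
    (hm2 : ∀ (i : Fin M) (t : ℝ), 0 ≤ t → t ≤ N * h →
      ∫ ω, (x i t ω) ^ 2 ∂P = σ ^ 2 / (2 * a) * (Real.exp (2 * a * t) - 1))
    (hm4 : ∀ (i : Fin M) (s t : ℝ), 0 ≤ s → s ≤ t → t ≤ N * h →
      ∫ ω, (x i s ω) ^ 2 * (x i t ω) ^ 2 ∂P =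
        σ ^ 4 / (4 * a ^ 2) * (Real.exp (2 * a * s) - 1) * Real.exp (2 * a * t) *
          ((Real.exp (-2 * a * s) - Real.exp (-2 * a * t)) +
            3 * (1 - Real.exp (-2 * a * s)))) :
    ∫ ω, ((1 / (M : ℝ)) * ∑ i : Fin M, ∑ k ∈ Finset.range N, h * (x i (k * h) ω) ^ 2 -
        σ ^ 2 / (2 * a) * ((Real.exp (2 * a * (N * h)) - 1) / (2 * a) - N * h)) ^ 2 ∂P =
      σ ^ 4 * (-2 * a * h + Real.exp (2 * a * h) - 1) ^ 2 *
          (Real.exp (2 * a * (N * h)) - 1) ^ 2 /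
        (16 * a ^ 4 * (Real.exp (2 * a * h) - 1) ^ 2) +
      σ ^ 4 * (N * h) * (h * (Real.exp (2 * a * (N * h)) - 1) *
            (4 * Real.exp (2 * a * h) + Real.exp (2 * a * (N * h)) + 1) -
          (Real.exp (2 * a * h) - 1) *
            (Real.exp (2 * a * h) + 4 * Real.exp (2 * a * (N * h)) + 1) * (N * h)) /
        (2 * a ^ 2 * (Real.exp (2 * a * h) - 1) ^ 2) / ((M : ℝ) * N) := by
  have : Nonempty (Fin M) := ⟨⟨0, hM⟩⟩
  set Y : Fin M → Ω → ℝ := fun i ω => ∑ k ∈ range N, h * x i (k * h) ω ^ 2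
  have hY_indep : Pairwise fun i j => Y i ⟂ᵢ[P] Y j := by
    have := hindep.comp (fun _ v => ∑ k : Fin N, h * v k ^ 2) fun _ => by fun_prop
    intro i j hij
    convert this.indepFun hij <;> ext ω <;>
      exact (Fin.sum_univ_eq_sum_range (fun k : ℕ => h * x _ (k * h) ω ^ 2) N).symm
  have mse := integral_average_sub_const_sq (P := P) (Y := Y)
    (fun i => memLp_sum_range_grid (hL4 i)) hY_indep
    (fun i => integral_sum_range_grid (hm2 i) hh.le (hL4 i))
    (fun i => variance_sum_range_grid (hm2 i) (hm4 i) hh.le (hL4 i))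
    (σ ^ 2 / (2 * a) * ((Real.exp (2 * a * (N * h)) - 1) / (2 * a) - N * h))
  rw [Fintype.card_fin] at mse
  rw [mse, Real.exp_two_mul_nat_mul]
  set q := Real.exp (2 * a * h)
  have hq : q ≠ 1 := (Real.exp_lt_one_iff.mpr (by nlinarith)).ne
  have hq' : q - 1 ≠ 0 := sub_ne_zero.mpr hq
  have hbias : ∑ k ∈ range N, (q ^ k - 1) = (q ^ N - 1) / (q - 1) - N := by
    simp [sum_sub_distrib, geom_sum_eq hq]
  have hdouble : ∑ k ∈ range N, ∑ l ∈ range N,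
      (q ^ (k + l) - 2 * q ^ max k l + q ^ (max k l - min k l)) =
      ((q ^ N - 1) * (4 * q + q ^ N + 1) - N * (q - 1) * (q + 4 * q ^ N + 1)) / (q - 1) ^ 2 :=
    eq_div_of_mul_eq (pow_ne_zero 2 hq') <| by
      rw [mul_comm, sq_sub_one_mul_sum_range_sum_range_pow_max]
  have ha0 : a ≠ 0 := ha.ne
  have hM0 : (M : ℝ) ≠ 0 := by positivity
  have hN0 : (N : ℝ) ≠ 0 := by positivity
  rw [hbias, hdouble]
  field_simp
  ring

/-- Theorem 3.1 (finite-horizon, undiscounted MSE of Monte-Carlo policy evaluation).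
With `T = N·h`, `B = M·N`, `M` independent trajectories whose grid values have the
second and fourth moments of the scalar Langevin process with drift `a < 0` and
diffusion `σ`, the Monte-Carlo estimator `V̂_M(h) = (1/M)Σ_iΣ_k h·x_i(kh)²` satisfies
`E[(V̂_M(h) − V_T)²] = E1(h,T,a) + E2(h,T,a)/B`. -/
theorem stmt_0
    {Ω : Type*} [MeasurableSpace Ω] (P : Measure Ω) [IsProbabilityMeasure P]
    (σ a h : ℝ) (hσ : 0 < σ) (ha : a < 0) (hh : 0 < h)
    (N M : ℕ) (hN : 1 ≤ N) (hM : 1 ≤ M)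
    (x : Fin M → ℝ → Ω → ℝ)
    (hmeas : ∀ (i : Fin M) (k : ℕ), k < N → Measurable (x i (k * h)))
    (hL4 : ∀ (i : Fin M) (k : ℕ), k < N → MemLp (x i (k * h)) 4 P)
    (hindep : iIndepFun
      (fun (i : Fin M) (ω : Ω) => fun k : Fin N => x i (k * h) ω) P)
    (hm2 : ∀ (i : Fin M) (t : ℝ), 0 ≤ t → t ≤ N * h →
      ∫ ω, (x i t ω) ^ 2 ∂P = σ ^ 2 / (2 * a) * (Real.exp (2 * a * t) - 1))
    (hm4 : ∀ (i : Fin M) (s t : ℝ), 0 ≤ s → s ≤ t → t ≤ N * h →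
      ∫ ω, (x i s ω) ^ 2 * (x i t ω) ^ 2 ∂P =
        σ ^ 4 / (4 * a ^ 2) * (Real.exp (2 * a * s) - 1) * Real.exp (2 * a * t) *
          ((Real.exp (-2 * a * s) - Real.exp (-2 * a * t)) +
            3 * (1 - Real.exp (-2 * a * s)))) :
    ∫ ω, ((1 / (M : ℝ)) * ∑ i : Fin M, ∑ k ∈ Finset.range N, h * (x i (k * h) ω) ^ 2 -
        σ ^ 2 / (2 * a) * ((Real.exp (2 * a * (N * h)) - 1) / (2 * a) - N * h)) ^ 2 ∂P =
      σ ^ 4 * (-2 * a * h + Real.exp (2 * a * h) - 1) ^ 2 *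
          (Real.exp (2 * a * (N * h)) - 1) ^ 2 /
        (16 * a ^ 4 * (Real.exp (2 * a * h) - 1) ^ 2) +
      σ ^ 4 * (N * h) * (h * (Real.exp (2 * a * (N * h)) - 1) *
            (4 * Real.exp (2 * a * h) + Real.exp (2 * a * (N * h)) + 1) -
          (Real.exp (2 * a * h) - 1) *
            (Real.exp (2 * a * h) + 4 * Real.exp (2 * a * (N * h)) + 1) * (N * h)) /
        (2 * a ^ 2 * (Real.exp (2 * a * h) - 1) ^ 2) / ((M : ℝ) * N) :=
  stmt_0_general P σ a h ha hh N M hN hM x hL4 hindep hm2 hm4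
end

section
/- Let (Ω, P) be a probability space, σ > 0, h > 0, and let N, M ≥ 1 be integers; set T = N·h and B = M·N. Let x_1, …, x_M be real-valued stochastic processes on Ω indexed by t ∈ [0, T] such that each x_i(kh) is measurable and lies in L⁴(P) for 0 ≤ k ≤ N−1, the random vectors (x_i(0), x_i(h), …, x_i((N−1)h)), i = 1, …, M, are mutually independent, and for each i the moment identities E[x_i(t)²] = σ² t for all t ∈ [0, T] and E[x_i(s)² x_i(t)²] = σ⁴ s (t + 2s) for all 0 ≤ s ≤ t ≤ T hold. Define V̂_M(h) = (1/M) Σ_{i=1}^{M} Σ_{k=0}^{N−1} h · x_i(kh)² and V_T = σ² T² / 2. Then E[(V̂_M(h) − V_T)²] = (σ⁴T²/4)·h² + (σ⁴T⁵/3)·1/(hB) + σ⁴T²(−2T² + 2hT − h²)/(3B). -/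
/-!
Each trajectory contributes the Riemann sum `Y = ∑ₖ h x(kh)²`. On the grid the moment identities
read `E[x(kh)² x(lh)²] = σ⁴h²(kl + 2 min(k,l)²)`, so `E[Y]` and `E[Y²]` reduce to the sums
`∑ k` and `∑∑ min(k,l)²`. The estimator is the sample mean of `M` independent copies of `Y`, so
its mean squared error splits into the squared bias `(E[Y] − V_T)²` and the variance `Var[Y] / M`.
-/

open MeasureTheory ProbabilityTheory
open scoped ENNReal

lemma sum_range_natCast (N : ℕ) : ∑ k ∈ Finset.range N, (k : ℝ) = N * (N - 1) / 2 := by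
  induction N with
  | zero => simp
  | succ n ih => rw [Finset.sum_range_succ, ih]; push_cast; ring

lemma sum_range_natCast_sq (N : ℕ) :
    ∑ k ∈ Finset.range N, (k : ℝ) ^ 2 = N * (N - 1) * (2 * N - 1) / 6 := by
  induction N with
  | zero => simp
  | succ n ih => rw [Finset.sum_range_succ, ih]; push_cast; ring

lemma sum_range_sum_range_min_sq (N : ℕ) :
    ∑ k ∈ Finset.range N, ∑ l ∈ Finset.range N, min (k : ℝ) l ^ 2 =
      N * (N - 1) * (N ^ 2 - N + 1) / 6 := by
  induction N with
  | zero => simp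
  | succ n ih =>
    have hlt : ∀ k ∈ Finset.range n, (k : ℝ) < n := fun k hk => by
      exact_mod_cast Finset.mem_range.mp hk
    have hrow : ∑ k ∈ Finset.range n, min (k : ℝ) n ^ 2 = ∑ k ∈ Finset.range n, (k : ℝ) ^ 2 :=
      Finset.sum_congr rfl fun k hk => by rw [min_eq_left (hlt k hk).le]
    have hcol : ∑ l ∈ Finset.range n, min (n : ℝ) l ^ 2 = ∑ l ∈ Finset.range n, (l : ℝ) ^ 2 :=
      Finset.sum_congr rfl fun l hl => by rw [min_eq_right (hlt l hl).le]
    simp only [Finset.sum_range_succ, Finset.sum_add_distrib, ih, hrow, hcol, min_self,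
      sum_range_natCast_sq]
    push_cast
    ring

lemma memLp_sq_of_memLp_four {Ω : Type*} [MeasurableSpace Ω] {P : Measure Ω} {f : Ω → ℝ}
    (hf : MemLp f 4 P) : MemLp (fun ω => f ω ^ 2) 2 P := by
  have : ENNReal.HolderTriple 4 4 2 := ⟨by
    rw [show (4 : ℝ≥0∞) = 2 * 2 by norm_num, ENNReal.mul_inv (by simp) (by simp), ← two_mul,
      ← mul_assoc, ENNReal.mul_inv_cancel (by simp) (by simp), one_mul]⟩
  simpa only [sq] using hf.mul' hf

theorem integral_sampleMean_sub_sq {Ω ι : Type*} [MeasurableSpace Ω] {P : Measure Ω}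
    [IsProbabilityMeasure P] [Fintype ι] [Nonempty ι] {Y : ι → Ω → ℝ} (hY : ∀ i, MemLp (Y i) 2 P)
    (hindep : Pairwise fun i j => IndepFun (Y i) (Y j) P) {m s : ℝ}
    (hm : ∀ i, ∫ ω, Y i ω ∂P = m) (hs : ∀ i, ∫ ω, Y i ω ^ 2 ∂P = s) (c : ℝ) :
    ∫ ω, (1 / (Fintype.card ι : ℝ) * ∑ i, Y i ω - c) ^ 2 ∂P =
      (m - c) ^ 2 + (s - m ^ 2) / Fintype.card ι := by
  set n : ℝ := (Fintype.card ι : ℝ)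
  have hn : n ≠ 0 := Nat.cast_ne_zero.mpr Fintype.card_ne_zero
  have hsum : MemLp (fun ω => ∑ i, Y i ω) 2 P := memLp_finsetSum _ fun i _ => hY i
  have hmean : ∫ ω, ∑ i, Y i ω ∂P = n * m := by
    simp [integral_finsetSum _ fun i _ => (hY i).integrable one_le_two, hm, n]
  have hvar : Var[fun ω => ∑ i, Y i ω; P] = n * (s - m ^ 2) := by
    rw [← Finset.sum_fn, IndepFun.variance_sum (fun i _ => hY i) fun i _ j _ hij => hindep hij]
    simp [variance_eq_sub (hY _), Pi.pow_apply, hs, hm, n, mul_sub]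
  have hZ : MemLp (fun ω => 1 / n * ∑ i, Y i ω - c) 2 P :=
    (hsum.const_mul _).sub (memLp_const c)
  calc ∫ ω, (1 / n * ∑ i, Y i ω - c) ^ 2 ∂P
      = Var[fun ω => 1 / n * ∑ i, Y i ω - c; P] + (∫ ω, (1 / n * ∑ i, Y i ω - c) ∂P) ^ 2 := by
        rw [variance_eq_sub hZ]
        simp only [Pi.pow_apply, sub_add_cancel]
    _ = (m - c) ^ 2 + (s - m ^ 2) / n := by
        rw [variance_sub_const (hsum.const_mul _).1, variance_const_mul, hvar,
          integral_sub ((hsum.integrable one_le_two).const_mul _) (integrable_const c),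
          integral_const_mul, hmean]
        simp only [integral_const, probReal_univ, one_smul]
        field_simp
        ring

section GridCost

variable {Ω : Type*} [MeasurableSpace Ω] {P : Measure Ω}

/-- Left Riemann sum for `∫₀^{N h} X(t)² dt`; the estimator `V̂_M(h)` is the average of
`gridCost h N (x i)` over the trajectories `i`. -/
def gridCost (h : ℝ) (N : ℕ) (X : ℝ → Ω → ℝ) (ω : Ω) : ℝ :=
  ∑ k ∈ Finset.range N, h * X (k * h) ω ^ 2

variable {X : ℝ → Ω → ℝ} {σ h T : ℝ} {N : ℕ}

lemma natCast_mul_mem_Icc (hh : 0 ≤ h) {k : ℕ} (hk : k ≤ N) : (k : ℝ) * h ∈ Set.Icc 0 (N * h) :=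
  ⟨by positivity, mul_le_mul_of_nonneg_right (by exact_mod_cast hk) hh⟩

lemma integral_sq_mul_sq_eq_min
    (hm4 : ∀ s t, 0 ≤ s → s ≤ t → t ≤ T →
      ∫ ω, X s ω ^ 2 * X t ω ^ 2 ∂P = σ ^ 4 * s * (t + 2 * s))
    {s t : ℝ} (hs : s ∈ Set.Icc 0 T) (ht : t ∈ Set.Icc 0 T) :
    ∫ ω, X s ω ^ 2 * X t ω ^ 2 ∂P = σ ^ 4 * (s * t + 2 * min s t ^ 2) := by
  rcases le_total s t with hst | hts
  · rw [hm4 s t hs.1 hst ht.2, min_eq_left hst]; ring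
  · simp_rw [mul_comm (X s _ ^ 2)]
    rw [hm4 t s ht.1 hts hs.2, min_eq_right hts]; ring

lemma memLp_gridCost (hX : ∀ k < N, MemLp (X (k * h)) 4 P) : MemLp (gridCost h N X) 2 P :=
  memLp_finsetSum _ fun k hk =>
    (memLp_sq_of_memLp_four (hX k (Finset.mem_range.mp hk))).const_mul h

lemma integral_gridCost [IsFiniteMeasure P] (hh : 0 ≤ h) (hX : ∀ k < N, MemLp (X (k * h)) 4 P)
    (hm2 : ∀ t, 0 ≤ t → t ≤ N * h → ∫ ω, X t ω ^ 2 ∂P = σ ^ 2 * t) :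
    ∫ ω, gridCost h N X ω ∂P = σ ^ 2 * h ^ 2 * (N * (N - 1) / 2) := by
  have hterm : ∀ k ∈ Finset.range N, ∫ ω, h * X (k * h) ω ^ 2 ∂P = σ ^ 2 * h ^ 2 * k := by
    intro k hk
    obtain ⟨h0, hT⟩ := natCast_mul_mem_Icc hh (Finset.mem_range.mp hk).le
    rw [integral_const_mul, hm2 _ h0 hT]; ring
  unfold gridCost
  rw [integral_finsetSum _ fun k hk =>
      ((memLp_sq_of_memLp_four (hX k (Finset.mem_range.mp hk))).integrable one_le_two).const_mul h,
    Finset.sum_congr rfl hterm, ← Finset.mul_sum, sum_range_natCast]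

lemma integral_gridCost_sq (hh : 0 ≤ h) (hX : ∀ k < N, MemLp (X (k * h)) 4 P)
    (hm4 : ∀ s t, 0 ≤ s → s ≤ t → t ≤ N * h →
      ∫ ω, X s ω ^ 2 * X t ω ^ 2 ∂P = σ ^ 4 * s * (t + 2 * s)) :
    ∫ ω, gridCost h N X ω ^ 2 ∂P =
      σ ^ 4 * h ^ 4 * ((N * (N - 1) / 2) ^ 2 + N * (N - 1) * (N ^ 2 - N + 1) / 3) := by
  have hsq : ∀ k ∈ Finset.range N, MemLp (fun ω => X (k * h) ω ^ 2) 2 P := fun k hk =>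
    memLp_sq_of_memLp_four (hX k (Finset.mem_range.mp hk))
  have hterm : ∀ k ∈ Finset.range N, ∀ l ∈ Finset.range N,
      ∫ ω, h * X (k * h) ω ^ 2 * (h * X (l * h) ω ^ 2) ∂P =
        σ ^ 4 * h ^ 4 * (k * l + 2 * min (k : ℝ) l ^ 2) := by
    intro k hk l hl
    have hkl := integral_sq_mul_sq_eq_min hm4 (natCast_mul_mem_Icc hh (Finset.mem_range.mp hk).le)
      (natCast_mul_mem_Icc hh (Finset.mem_range.mp hl).le)
    rw [← min_mul_of_nonneg _ _ hh] at hkl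
    simp_rw [mul_mul_mul_comm h, integral_const_mul, hkl]
    ring
  have hint : ∀ k ∈ Finset.range N, ∀ l ∈ Finset.range N,
      Integrable (fun ω => h * X (k * h) ω ^ 2 * (h * X (l * h) ω ^ 2)) P := by
    intro k hk l hl
    simp_rw [mul_mul_mul_comm h]
    exact ((hsq k hk).integrable_mul (hsq l hl)).const_mul _
  unfold gridCost
  simp_rw [sq (Finset.sum _ _), Finset.sum_mul_sum]
  rw [integral_finsetSum _ fun k hk => integrable_finsetSum _ fun l hl => hint k hk l hl,
    Finset.sum_congr rfl fun k hk => (integral_finsetSum _ fun l hl => hint k hk l hl).trans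
      (Finset.sum_congr rfl (hterm k hk))]
  simp only [← Finset.mul_sum, Finset.sum_add_distrib]
  rw [← Finset.sum_mul, sum_range_natCast, sum_range_sum_range_min_sq]
  ring

lemma iIndepFun_gridCost {ι : Type*} {x : ι → ℝ → Ω → ℝ} (hindep : iIndepFun (fun i ω => fun k : Fin N => x i (k * h) ω) P) :
    iIndepFun (fun i => gridCost h N (x i)) P := by
  convert hindep.comp (fun _ v => ∑ k : Fin N, h * v k ^ 2) fun _ => by fun_prop
  ext ω
  exact (Fin.sum_univ_eq_sum_range (fun k => h * x _ (k * h) ω ^ 2) N).symm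

end GridCost

theorem stmt_1_general
    {Ω : Type*} [MeasurableSpace Ω] (P : Measure Ω) [IsProbabilityMeasure P]
    (σ h : ℝ) (hh : 0 < h)
    (N M : ℕ) (hN : 1 ≤ N) (hM : 1 ≤ M)
    (x : Fin M → ℝ → Ω → ℝ)
    (hL4 : ∀ (i : Fin M) (k : ℕ), k < N → MemLp (x i (k * h)) 4 P)
    (hindep : iIndepFun
      (fun (i : Fin M) (ω : Ω) => fun k : Fin N => x i (k * h) ω) P)
    (hm2 : ∀ (i : Fin M) (t : ℝ), 0 ≤ t → t ≤ N * h →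
      ∫ ω, (x i t ω) ^ 2 ∂P = σ ^ 2 * t)
    (hm4 : ∀ (i : Fin M) (s t : ℝ), 0 ≤ s → s ≤ t → t ≤ N * h →
      ∫ ω, (x i s ω) ^ 2 * (x i t ω) ^ 2 ∂P = σ ^ 4 * s * (t + 2 * s)) :
    ∫ ω, ((1 / (M : ℝ)) * ∑ i : Fin M, ∑ k ∈ Finset.range N, h * (x i (k * h) ω) ^ 2 -
        σ ^ 2 * (N * h) ^ 2 / 2) ^ 2 ∂P =
      σ ^ 4 * (N * h) ^ 2 / 4 * h ^ 2 +
        σ ^ 4 * (N * h) ^ 5 / 3 * (1 / (h * ((M : ℝ) * N))) +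
        σ ^ 4 * (N * h) ^ 2 * (-2 * (N * h) ^ 2 + 2 * h * (N * h) - h ^ 2) /
          (3 * ((M : ℝ) * N)) := by
  have : Nonempty (Fin M) := ⟨⟨0, hM⟩⟩
  have hmse := integral_sampleMean_sub_sq (fun i => memLp_gridCost (hL4 i))
    (fun i j hij => (iIndepFun_gridCost hindep).indepFun hij)
    (fun i => integral_gridCost hh.le (hL4 i) (hm2 i))
    (fun i => integral_gridCost_sq hh.le (hL4 i) (hm4 i)) (σ ^ 2 * (N * h) ^ 2 / 2)
  rw [Fintype.card_fin] at hmse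
  refine hmse.trans ?_
  have hM0 : (M : ℝ) ≠ 0 := Nat.cast_ne_zero.mpr (Nat.one_le_iff_ne_zero.mp hM)
  have hN0 : (N : ℝ) ≠ 0 := Nat.cast_ne_zero.mpr (Nat.one_le_iff_ne_zero.mp hN)
  field_simp
  ring

/-- Corollary 3.2 (MSE of Monte-Carlo policy evaluation for the marginally stable
system `a = 0`). With `T = N·h`, `B = M·N`, and `M` independent trajectories whose grid
values have the moments of scaled Brownian motion (`E[x(t)²] = σ²t`,
`E[x(s)²x(t)²] = σ⁴s(t + 2s)` for `s ≤ t`), the Monte-Carlo estimator satisfies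
`E[(V̂_M(h) − σ²T²/2)²] = (σ⁴T²/4)h² + (σ⁴T⁵/3)/(hB) + σ⁴T²(−2T² + 2hT − h²)/(3B)`. -/
theorem stmt_1
    {Ω : Type*} [MeasurableSpace Ω] (P : Measure Ω) [IsProbabilityMeasure P]
    (σ h : ℝ) (hσ : 0 < σ) (hh : 0 < h)
    (N M : ℕ) (hN : 1 ≤ N) (hM : 1 ≤ M)
    (x : Fin M → ℝ → Ω → ℝ)
    (hmeas : ∀ (i : Fin M) (k : ℕ), k < N → Measurable (x i (k * h)))
    (hL4 : ∀ (i : Fin M) (k : ℕ), k < N → MemLp (x i (k * h)) 4 P)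
    (hindep : iIndepFun
      (fun (i : Fin M) (ω : Ω) => fun k : Fin N => x i (k * h) ω) P)
    (hm2 : ∀ (i : Fin M) (t : ℝ), 0 ≤ t → t ≤ N * h →
      ∫ ω, (x i t ω) ^ 2 ∂P = σ ^ 2 * t)
    (hm4 : ∀ (i : Fin M) (s t : ℝ), 0 ≤ s → s ≤ t → t ≤ N * h →
      ∫ ω, (x i s ω) ^ 2 * (x i t ω) ^ 2 ∂P = σ ^ 4 * s * (t + 2 * s)) :
    ∫ ω, ((1 / (M : ℝ)) * ∑ i : Fin M, ∑ k ∈ Finset.range N, h * (x i (k * h) ω) ^ 2 -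
        σ ^ 2 * (N * h) ^ 2 / 2) ^ 2 ∂P =
      σ ^ 4 * (N * h) ^ 2 / 4 * h ^ 2 +
        σ ^ 4 * (N * h) ^ 5 / 3 * (1 / (h * ((M : ℝ) * N))) +
        σ ^ 4 * (N * h) ^ 2 * (-2 * (N * h) ^ 2 + 2 * h * (N * h) - h ^ 2) /
          (3 * ((M : ℝ) * N)) :=
  stmt_1_general P σ h hh N M hN hM x hL4 hindep hm2 hm4
end

section
/- Fix σ > 0, a < 0 and T > 0. There exist constants C > 0 and h₀ > 0 such that for all h ∈ (0, h₀]: |E2(h, T, a) − [ −σ⁴T(4aT − e^{4aT} + e^{2aT}(8aT − 4) + 5)/(8a⁴) · (1/h) + σ⁴T(1 − e^{4aT} + 4aT e^{2aT})/(4a³) − σ⁴T(1 + 4aT + e^{2aT}(8aT + 4) − 5e^{4aT})/(24a²) · h − σ⁴T(e^{4aT} − 1)/(12a) · h² ]| ≤ C h³, where E2(h,T,a) = σ⁴T[h(e^{2aT} − 1)(4e^{2ah} + e^{2aT} + 1) − (e^{2ah} − 1)(e^{2ah} + 4e^{2aT} + 1)T] / (2a²(e^{2ah} − 1)²). -/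
set_option maxHeartbeats 2000000

/-! Auxiliary definitions: explicit polynomial coefficients for the expansion. -/

noncomputable section StmtAux

def alph (a T E h : ℝ) : ℝ := (30*a^2 - 24*a^2*E - 6*a^2*E^2 + 24*a^3*T + 48*a^3*T*E) + (-12*a^3 + 12*a^3*E^2 - 24*a^4*T - 48*a^4*T*E)*h + (2*a^4 + 8*a^4*E - 10*a^4*E^2 + 8*a^5*T + 16*a^5*T*E)*h^2 + (-4*a^5 + 4*a^5*E^2)*h^3

def Kalph (a T E : ℝ) : ℝ := |(30*a^2 - 24*a^2*E - 6*a^2*E^2 + 24*a^3*T + 48*a^3*T*E : ℝ)| + |(-12*a^3 + 12*a^3*E^2 - 24*a^4*T - 48*a^4*T*E : ℝ)| + |(2*a^4 + 8*a^4*E - 10*a^4*E^2 + 8*a^5*T + 16*a^5*T*E : ℝ)| + |(-4*a^5 + 4*a^5*E^2 : ℝ)|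

def bet (a T E h : ℝ) : ℝ := (-60*a^2 + 48*a^2*E + 12*a^2*E^2 - 48*a^3*T - 96*a^3*T*E) + (24*a^3 - 24*a^3*E^2)*h + (-100*a^4 + 80*a^4*E + 20*a^4*E^2 - 16*a^5*T - 32*a^5*T*E)*h^2 + (8*a^5 - 8*a^5*E^2)*h^3

def Kbet (a T E : ℝ) : ℝ := |(-60*a^2 + 48*a^2*E + 12*a^2*E^2 - 48*a^3*T - 96*a^3*T*E : ℝ)| + |(24*a^3 - 24*a^3*E^2 : ℝ)| + |(-100*a^4 + 80*a^4*E + 20*a^4*E^2 - 16*a^5*T - 32*a^5*T*E : ℝ)| + |(8*a^5 - 8*a^5*E^2 : ℝ)|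

def gam (a T E h : ℝ) : ℝ := (30*a^2 - 24*a^2*E - 6*a^2*E^2 + 24*a^3*T + 48*a^3*T*E) + (-12*a^3 + 12*a^3*E^2 + 24*a^4*T + 48*a^4*T*E)*h + (-22*a^4 + 8*a^4*E + 14*a^4*E^2 + 8*a^5*T + 16*a^5*T*E)*h^2 + (-4*a^5 + 4*a^5*E^2)*h^3

def RR (a T E h : ℝ) : ℝ := (-520/3*a^8 + 416/3*a^8*E + 104/3*a^8*E^2 - 1952/15*a^9*T - 3904/15*a^9*T*E) + (-704/15*a^9 + 448/5*a^9*E - 128/3*a^9*E^2 + 64*a^10*T + 128*a^10*T*E)*h + (-32*a^10 + 32*a^10*E^2)*h^2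

def KRR (a T E : ℝ) : ℝ := |(-520/3*a^8 + 416/3*a^8*E + 104/3*a^8*E^2 - 1952/15*a^9*T - 3904/15*a^9*T*E : ℝ)| + |(-704/15*a^9 + 448/5*a^9*E - 128/3*a^9*E^2 + 64*a^10*T + 128*a^10*T*E : ℝ)| + |(-32*a^10 + 32*a^10*E^2 : ℝ)|

/-- Degree-6 Taylor remainder bound for `exp`. -/
lemma exp_taylor6 {x : ℝ} (hx : |x| ≤ 1) :
    |Real.exp x - (1 + x + x^2/2 + x^3/6 + x^4/24 + x^5/120)| ≤ |x|^6 * (7/4320) := by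
  have h := Real.exp_bound hx (n := 6) (by norm_num)
  have hs : ∑ m ∈ Finset.range 6, x ^ m / (m.factorial : ℝ)
      = 1 + x + x^2/2 + x^3/6 + x^4/24 + x^5/120 := by
    norm_num [Finset.sum_range_succ, Nat.factorial]
  rw [hs] at h
  have hc : ((Nat.succ 6 : ℕ) : ℝ) / (((Nat.factorial 6 : ℕ) : ℝ) * (6 : ℕ)) = 7/4320 := by
    norm_num [Nat.factorial]
  calc |Real.exp x - (1 + x + x^2/2 + x^3/6 + x^4/24 + x^5/120)|
      ≤ |x|^6 * (((Nat.succ 6 : ℕ) : ℝ) / (((Nat.factorial 6 : ℕ) : ℝ) * (6 : ℕ))) := by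
        simpa using h
    _ = |x|^6 * (7/4320) := by rw [hc]

/-- Cubic polynomial bound on `[0,1]`. -/
lemma poly3_abs (c0 c1 c2 c3 h : ℝ) (h0 : 0 ≤ h) (h1 : h ≤ 1) :
    |c0 + c1*h + c2*h^2 + c3*h^3| ≤ |c0| + |c1| + |c2| + |c3| := by
  have hh : |h| ≤ 1 := abs_le.mpr ⟨by linarith, h1⟩
  have b1 : |c1*h| ≤ |c1| := by
    rw [abs_mul]; exact mul_le_of_le_one_right (abs_nonneg _) hh
  have b2 : |c2*h^2| ≤ |c2| := by
    rw [abs_mul, abs_pow]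
    exact mul_le_of_le_one_right (abs_nonneg _) (pow_le_one₀ (abs_nonneg _) hh)
  have b3 : |c3*h^3| ≤ |c3| := by
    rw [abs_mul, abs_pow]
    exact mul_le_of_le_one_right (abs_nonneg _) (pow_le_one₀ (abs_nonneg _) hh)
  calc |c0 + c1*h + c2*h^2 + c3*h^3|
      ≤ |c0 + c1*h + c2*h^2| + |c3*h^3| := abs_add_le _ _
    _ ≤ (|c0 + c1*h| + |c2*h^2|) + |c3*h^3| := by gcongr; exact abs_add_le _ _
    _ ≤ ((|c0| + |c1*h|) + |c2*h^2|) + |c3*h^3| := by gcongr; exact abs_add_le _ _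
    _ ≤ |c0| + |c1| + |c2| + |c3| := by linarith

/-- Quadratic polynomial bound on `[0,1]`. -/
lemma poly2_abs (c0 c1 c2 h : ℝ) (h0 : 0 ≤ h) (h1 : h ≤ 1) :
    |c0 + c1*h + c2*h^2| ≤ |c0| + |c1| + |c2| := by
  have := poly3_abs c0 c1 c2 0 h h0 h1
  simp only [zero_mul, add_zero, abs_zero] at this
  linarith

/-- Key exact algebraic identity rewriting the error as a single fraction. -/
lemma ident1 (σ a T h u E : ℝ) (ha : a ≠ 0) (hh : h ≠ 0) (hu : u - 1 ≠ 0) :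
    σ ^ 4 * T * (h * (E - 1) * (4 * u + E + 1) - (u - 1) * (u + 4 * E + 1) * T) /
        (2 * a ^ 2 * (u - 1) ^ 2) -
      (-(σ ^ 4 * T * (4 * a * T - E^2 + E * (8 * a * T - 4) + 5) / (8 * a ^ 4)) * (1 / h) +
        σ ^ 4 * T * (1 - E^2 + 4 * a * T * E) / (4 * a ^ 3) -
        σ ^ 4 * T * (1 + 4 * a * T + E * (8 * a * T + 4) - 5 * E^2) / (24 * a ^ 2) * h -
        σ ^ 4 * T * (E^2 - 1) / (12 * a) * h ^ 2)
    = σ ^ 4 * T * (alph a T E h * u^2 + bet a T E h * u + gam a T E h) /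
        (48 * a ^ 6 * (u - 1) ^ 2 * h) := by
  simp only [alph, bet, gam]
  field_simp
  ring

/-- Key exact algebraic identity: the Taylor-truncated combination is divisible by `h^6`. -/
lemma ident2 (a T E h : ℝ) :
    alph a T E h * (1 + 4*a*h + (4*a*h)^2/2 + (4*a*h)^3/6 + (4*a*h)^4/24 + (4*a*h)^5/120)
  + bet a T E h * (1 + 2*a*h + (2*a*h)^2/2 + (2*a*h)^3/6 + (2*a*h)^4/24 + (2*a*h)^5/120)
  + gam a T E h
  = h^6 * RR a T E h := by
  simp only [alph, bet, gam, RR]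
  ring

end StmtAux

/-- Variance-term expansion in the proof of Corollary 3.3: the Laurent/Taylor expansion
in `h`, up to order `h³`, of the per-budget variance term
`E2(h,T,a) = σ⁴T[h(e^{2aT} − 1)(4e^{2ah} + e^{2aT} + 1) − (e^{2ah} − 1)(e^{2ah} + 4e^{2aT} + 1)T] / (2a²(e^{2ah} − 1)²)`. -/
theorem stmt_3 (σ a T : ℝ) (hσ : 0 < σ) (ha : a < 0) (hT : 0 < T) :
    ∃ C > (0 : ℝ), ∃ h₀ > (0 : ℝ), ∀ h : ℝ, 0 < h → h ≤ h₀ →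
      |σ ^ 4 * T * (h * (Real.exp (2 * a * T) - 1) *
            (4 * Real.exp (2 * a * h) + Real.exp (2 * a * T) + 1) -
          (Real.exp (2 * a * h) - 1) *
            (Real.exp (2 * a * h) + 4 * Real.exp (2 * a * T) + 1) * T) /
          (2 * a ^ 2 * (Real.exp (2 * a * h) - 1) ^ 2) -
        (-(σ ^ 4 * T * (4 * a * T - Real.exp (4 * a * T) +
              Real.exp (2 * a * T) * (8 * a * T - 4) + 5) / (8 * a ^ 4)) * (1 / h) +
          σ ^ 4 * T * (1 - Real.exp (4 * a * T) + 4 * a * T * Real.exp (2 * a * T)) /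
            (4 * a ^ 3) -
          σ ^ 4 * T * (1 + 4 * a * T + Real.exp (2 * a * T) * (8 * a * T + 4) -
              5 * Real.exp (4 * a * T)) / (24 * a ^ 2) * h -
          σ ^ 4 * T * (Real.exp (4 * a * T) - 1) / (12 * a) * h ^ 2)| ≤ C * h ^ 3 := by
  have ha0 : a ≠ 0 := ne_of_lt ha
  have hna : (0:ℝ) < -a := by linarith
  set E := Real.exp (2 * a * T) with hEdef
  have hE4 : Real.exp (4 * a * T) = E ^ 2 := by
    rw [hEdef, sq, ← Real.exp_add]; ring_nf
  -- the constant
  set K : ℝ := KRR a T E + Kalph a T E * ((-(4*a))^6 * (7/4320))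
      + Kbet a T E * ((-(2*a))^6 * (7/4320)) with hKdef
  have hKR0 : 0 ≤ KRR a T E := by
    unfold KRR; positivity
  have hKa0 : 0 ≤ Kalph a T E := by
    unfold Kalph; positivity
  have hKb0 : 0 ≤ Kbet a T E := by
    unfold Kbet; positivity
  have hc4 : (0:ℝ) ≤ (-(4*a))^6 * (7/4320) := by positivity
  have hc2 : (0:ℝ) ≤ (-(2*a))^6 * (7/4320) := by positivity
  have hK0 : 0 ≤ K := by
    rw [hKdef]
    have h1 := mul_nonneg hKa0 hc4
    have h2 := mul_nonneg hKb0 hc2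
    linarith
  have ha8 : (0:ℝ) < a ^ 8 := by positivity
  refine ⟨σ ^ 4 * T * (K + 1) / (48 * a ^ 8),
    div_pos (mul_pos (by positivity) (by linarith)) (by positivity),
    min 1 (1 / (-(4*a))), lt_min one_pos (div_pos one_pos (by linarith)), ?_⟩
  intro h hh0 hhle
  have hh1 : h ≤ 1 := le_trans hhle (min_le_left _ _)
  have hh4a : -(4*a) * h ≤ 1 := by
    have := le_trans hhle (min_le_right _ _)
    calc -(4*a) * h ≤ -(4*a) * (1 / (-(4*a))) := by
          apply mul_le_mul_of_nonneg_left this (by linarith)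
      _ = 1 := by field_simp
  have habs4 : |4*a*h| ≤ 1 := by
    rw [abs_of_nonpos (by nlinarith)]; linarith
  have habs2 : |2*a*h| ≤ 1 := by
    rw [abs_of_nonpos (by nlinarith)]; linarith
  set u := Real.exp (2 * a * h) with hudef
  -- remainders
  have hr1 := exp_taylor6 habs2
  have hr2' := exp_taylor6 habs4
  have hexp4 : Real.exp (4*a*h) = u ^ 2 := by
    rw [hudef, sq, ← Real.exp_add]; ring_nf
  rw [hexp4] at hr2'
  have h2ah : (2:ℝ)*a*h = 2*a*h := rfl
  have hr1' : |u - (1 + 2*a*h + (2*a*h)^2/2 + (2*a*h)^3/6 + (2*a*h)^4/24 + (2*a*h)^5/120)|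
      ≤ (-(2*a))^6 * (7/4320) * h^6 := by
    have : |2*a*h|^6 = (-(2*a))^6 * h^6 := by
      rw [abs_of_nonpos (by nlinarith)]; ring
    calc |u - (1 + 2*a*h + (2*a*h)^2/2 + (2*a*h)^3/6 + (2*a*h)^4/24 + (2*a*h)^5/120)|
        ≤ |2*a*h|^6 * (7/4320) := hr1
      _ = (-(2*a))^6 * (7/4320) * h^6 := by rw [this]; ring
  have hr2 : |u^2 - (1 + 4*a*h + (4*a*h)^2/2 + (4*a*h)^3/6 + (4*a*h)^4/24 + (4*a*h)^5/120)|
      ≤ (-(4*a))^6 * (7/4320) * h^6 := by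
    have : |4*a*h|^6 = (-(4*a))^6 * h^6 := by
      rw [abs_of_nonpos (by nlinarith)]; ring
    calc |u^2 - (1 + 4*a*h + (4*a*h)^2/2 + (4*a*h)^3/6 + (4*a*h)^4/24 + (4*a*h)^5/120)|
        ≤ |4*a*h|^6 * (7/4320) := hr2'
      _ = (-(4*a))^6 * (7/4320) * h^6 := by rw [this]; ring
  -- u < 1 hence u - 1 ≠ 0, and (u-1)^2 ≥ a^2 h^2
  have hu1 : u < 1 := by
    rw [hudef]; exact Real.exp_lt_one_iff.mpr (by nlinarith)
  have hune : u - 1 ≠ 0 := by linarith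
  have huhalf : 1/2 ≤ u := by
    have := Real.add_one_le_exp (2*a*h)
    rw [← hudef] at this
    nlinarith
  have hah : a * h < 0 := mul_neg_of_neg_of_pos ha hh0
  have husq : a^2 * h^2 ≤ (u - 1)^2 := by
    have hinv := Real.add_one_le_exp (-(2*a*h))
    have hexpneg : Real.exp (-(2*a*h)) = 1 / u := by
      rw [hudef, Real.exp_neg, one_div]
    rw [hexpneg] at hinv
    have hu0 : 0 < u := by linarith
    have h1u : 1 - u ≥ -(2*a*h) * u := by
      have hmul := mul_le_mul_of_nonneg_right hinv (le_of_lt hu0)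
      rw [add_mul, one_div, inv_mul_cancel₀ (ne_of_gt hu0)] at hmul
      nlinarith [hmul]
    have h1u2 : 1 - u ≥ -a * h := by
      have hstep := mul_le_mul_of_nonneg_left huhalf (show (0:ℝ) ≤ -(2*a*h) by linarith)
      nlinarith [h1u, hstep]
    nlinarith [mul_nonneg (show (0:ℝ) ≤ 1 - u + a*h by linarith)
      (show (0:ℝ) ≤ 1 - u - a*h by linarith)]
  -- rewrite the expression
  rw [hE4]
  rw [ident1 σ a T h u E ha0 (ne_of_gt hh0) hune]
  -- bound the numerator combination
  have hsplit : alph a T E h * u^2 + bet a T E h * u + gam a T E h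
      = h^6 * RR a T E h
        + alph a T E h * (u^2 - (1 + 4*a*h + (4*a*h)^2/2 + (4*a*h)^3/6 + (4*a*h)^4/24 + (4*a*h)^5/120))
        + bet a T E h * (u - (1 + 2*a*h + (2*a*h)^2/2 + (2*a*h)^3/6 + (2*a*h)^4/24 + (2*a*h)^5/120)) := by
    linear_combination ident2 a T E h
  have halb : |alph a T E h| ≤ Kalph a T E := by
    unfold alph Kalph
    exact poly3_abs _ _ _ _ h (le_of_lt hh0) hh1
  have hbeb : |bet a T E h| ≤ Kbet a T E := by
    unfold bet Kbet
    exact poly3_abs _ _ _ _ h (le_of_lt hh0) hh1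
  have hRb : |RR a T E h| ≤ KRR a T E := by
    unfold RR KRR
    exact poly2_abs _ _ _ h (le_of_lt hh0) hh1
  have hGb : |alph a T E h * u^2 + bet a T E h * u + gam a T E h| ≤ K * h^6 := by
    rw [hsplit]
    have t1 : |h^6 * RR a T E h| ≤ KRR a T E * h^6 := by
      rw [abs_mul, abs_pow, abs_of_pos hh0]
      calc h^6 * |RR a T E h| ≤ h^6 * KRR a T E := by
            apply mul_le_mul_of_nonneg_left hRb (by positivity)
        _ = KRR a T E * h^6 := by ring
    have t2 : |alph a T E h * (u^2 - (1 + 4*a*h + (4*a*h)^2/2 + (4*a*h)^3/6 + (4*a*h)^4/24 + (4*a*h)^5/120))|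
        ≤ Kalph a T E * ((-(4*a))^6 * (7/4320)) * h^6 := by
      rw [abs_mul]
      calc |alph a T E h| * |u^2 - (1 + 4*a*h + (4*a*h)^2/2 + (4*a*h)^3/6 + (4*a*h)^4/24 + (4*a*h)^5/120)|
          ≤ Kalph a T E * ((-(4*a))^6 * (7/4320) * h^6) :=
            mul_le_mul halb hr2 (abs_nonneg _) hKa0
        _ = Kalph a T E * ((-(4*a))^6 * (7/4320)) * h^6 := by ring
    have t3 : |bet a T E h * (u - (1 + 2*a*h + (2*a*h)^2/2 + (2*a*h)^3/6 + (2*a*h)^4/24 + (2*a*h)^5/120))|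
        ≤ Kbet a T E * ((-(2*a))^6 * (7/4320)) * h^6 := by
      rw [abs_mul]
      calc |bet a T E h| * |u - (1 + 2*a*h + (2*a*h)^2/2 + (2*a*h)^3/6 + (2*a*h)^4/24 + (2*a*h)^5/120)|
          ≤ Kbet a T E * ((-(2*a))^6 * (7/4320) * h^6) :=
            mul_le_mul hbeb hr1' (abs_nonneg _) hKb0
        _ = Kbet a T E * ((-(2*a))^6 * (7/4320)) * h^6 := by ring
    have e1 := abs_add_le
      (h^6 * RR a T E h + alph a T E h * (u^2 - (1 + 4*a*h + (4*a*h)^2/2 + (4*a*h)^3/6 + (4*a*h)^4/24 + (4*a*h)^5/120)))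
      (bet a T E h * (u - (1 + 2*a*h + (2*a*h)^2/2 + (2*a*h)^3/6 + (2*a*h)^4/24 + (2*a*h)^5/120)))
    have e2 := abs_add_le (h^6 * RR a T E h)
      (alph a T E h * (u^2 - (1 + 4*a*h + (4*a*h)^2/2 + (4*a*h)^3/6 + (4*a*h)^4/24 + (4*a*h)^5/120)))
    have hKexp : K * h^6 = KRR a T E * h^6 + Kalph a T E * ((-(4*a))^6 * (7/4320)) * h^6
          + Kbet a T E * ((-(2*a))^6 * (7/4320)) * h^6 := by rw [hKdef]; ring
    rw [hKexp]
    linarith [t1, t2, t3, e1, e2]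
  -- finish: bound the fraction
  have hdenpos : 0 < 48 * a ^ 6 * (u - 1) ^ 2 * h := by
    have : (0:ℝ) < (u-1)^2 := by positivity
    positivity
  have habsfrac : |σ ^ 4 * T * (alph a T E h * u^2 + bet a T E h * u + gam a T E h) /
      (48 * a ^ 6 * (u - 1) ^ 2 * h)|
      = σ ^ 4 * T * |alph a T E h * u^2 + bet a T E h * u + gam a T E h| /
      (48 * a ^ 6 * (u - 1) ^ 2 * h) := by
    rw [abs_div, abs_of_pos hdenpos, abs_mul, abs_of_pos (by positivity : (0:ℝ) < σ^4*T)]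
  rw [habsfrac]
  have hdenlb : 48 * a ^ 8 * h ^ 3 ≤ 48 * a ^ 6 * (u - 1) ^ 2 * h := by
    have ha6 : (0:ℝ) < a ^ 6 := by positivity
    nlinarith [mul_le_mul_of_nonneg_left husq (show (0:ℝ) ≤ 48*a^6*h by positivity)]
  have hnum : σ ^ 4 * T * |alph a T E h * u^2 + bet a T E h * u + gam a T E h|
      ≤ σ ^ 4 * T * (K * h^6) := by
    apply mul_le_mul_of_nonneg_left hGb (by positivity)
  calc σ ^ 4 * T * |alph a T E h * u^2 + bet a T E h * u + gam a T E h| /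
      (48 * a ^ 6 * (u - 1) ^ 2 * h)
      ≤ σ ^ 4 * T * (K * h^6) / (48 * a ^ 8 * h ^ 3) := by
        apply div_le_div₀ (by positivity) hnum (by positivity) hdenlb
    _ = σ ^ 4 * T * K / (48 * a ^ 8) * h ^ 3 := by
        field_simp
    _ ≤ σ ^ 4 * T * (K + 1) / (48 * a ^ 8) * h ^ 3 := by
        gcongr
        linarith
end

section
/- For all σ > 0, a < 0, T > 0 and h > 0: σ⁴ h² (e^{2aT} − 1)² / (16a²) ≤ E1(h, T, a) ≤ σ⁴ h² (e^{2aT} − 1)² / (4a²), where E1(h,T,a) = σ⁴(−2ah + e^{2ah} − 1)²(e^{2aT} − 1)² / (16a⁴(e^{2ah} − 1)²). -/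
lemma key_poly (t : ℝ) (ht0 : 0 ≤ t) :
    (1 - t) * (1 + t + t^2/2 + t^3/6 + t^4*5/96) ^ 2 ≤ 1 + t := by
  nlinarith [pow_nonneg ht0 3, pow_nonneg ht0 4, pow_nonneg ht0 5, pow_nonneg ht0 6,
    pow_nonneg ht0 7, pow_nonneg ht0 8, pow_nonneg ht0 9]

lemma key (y : ℝ) (hy : 0 ≤ y) : (2 - y) * Real.exp y ≤ 2 + y := by
  rcases le_or_gt 2 y with h2 | h2
  · nlinarith [Real.exp_pos y]
  · have ht0 : 0 ≤ y / 2 := by positivity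
    have ht1 : y / 2 ≤ 1 := by linarith
    have hexp : Real.exp y = Real.exp (y/2) ^ 2 := by
      rw [← Real.exp_nat_mul]; norm_num; ring_nf
    have hub : Real.exp (y/2) ≤ 1 + y/2 + (y/2)^2/2 + (y/2)^3/6 + (y/2)^4*5/96 := by
      have := Real.exp_bound' ht0 ht1 (n := 4)
      norm_num [Finset.sum_range_succ, Nat.factorial] at this
      linarith
    have hpos : 0 < Real.exp (y/2) := Real.exp_pos _
    have hP := key_poly (y/2) ht0
    have hsq : Real.exp (y/2) ^ 2 ≤ (1 + y/2 + (y/2)^2/2 + (y/2)^3/6 + (y/2)^4*5/96) ^ 2 :=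
      pow_le_pow_left₀ hpos.le hub 2
    rw [hexp]
    nlinarith [mul_le_mul_of_nonneg_left hsq (by linarith : (0:ℝ) ≤ 1 - y/2)]

/-- Non-asymptotic two-sided bound on the approximation-error term `E1` of
Theorem 3.1: for all `σ > 0`, `a < 0`, `T > 0` and `h > 0`,
`σ⁴h²(e^{2aT}−1)²/(16a²) ≤ E1(h,T,a) ≤ σ⁴h²(e^{2aT}−1)²/(4a²)`, where
`E1(h,T,a) = σ⁴(−2ah + e^{2ah} − 1)²(e^{2aT} − 1)² / (16a⁴(e^{2ah} − 1)²)`. -/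
theorem stmt_4 (σ a T h : ℝ) (hσ : 0 < σ) (ha : a < 0) (hT : 0 < T) (hh : 0 < h) :
    σ ^ 4 * h ^ 2 * (Real.exp (2 * a * T) - 1) ^ 2 / (16 * a ^ 2) ≤
      σ ^ 4 * (-2 * a * h + Real.exp (2 * a * h) - 1) ^ 2 * (Real.exp (2 * a * T) - 1) ^ 2 /
        (16 * a ^ 4 * (Real.exp (2 * a * h) - 1) ^ 2) ∧
    σ ^ 4 * (-2 * a * h + Real.exp (2 * a * h) - 1) ^ 2 * (Real.exp (2 * a * T) - 1) ^ 2 /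
        (16 * a ^ 4 * (Real.exp (2 * a * h) - 1) ^ 2) ≤
      σ ^ 4 * h ^ 2 * (Real.exp (2 * a * T) - 1) ^ 2 / (4 * a ^ 2) := by
  set E := Real.exp (2 * a * h) with hEdef
  set K := Real.exp (2 * a * T) - 1 with hKdef
  have hx : 2 * a * h < 0 := by nlinarith
  have hEpos : 0 < E := Real.exp_pos _
  have hE1 : E < 1 := by rw [hEdef]; exact Real.exp_lt_one_iff.mpr hx
  have hmul : Real.exp (-(2 * a * h)) * E = 1 := by
    rw [hEdef, ← Real.exp_add]; simp
  have f1 : 2 + 2 * a * h ≤ (2 - 2 * a * h) * E := by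
    have hk := key (-(2 * a * h)) (by linarith)
    nlinarith [mul_le_mul_of_nonneg_right hk hEpos.le, hmul]
  have f2 : (1 - 2 * a * h) * E ≤ 1 := by
    have hk := Real.add_one_le_exp (-(2 * a * h))
    nlinarith [mul_le_mul_of_nonneg_right hk hEpos.le, hmul]
  have hDpos : 0 < a * h * (E - 1) :=
    mul_pos_of_neg_of_neg (by nlinarith) (by linarith)
  have hD1 : a * h * (E - 1) ≤ -2 * a * h + E - 1 := by nlinarith [f1]
  have hD2 : -2 * a * h + E - 1 ≤ 2 * (a * h * (E - 1)) := by nlinarith [f2]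
  have hEne : E - 1 ≠ 0 := by intro hc; linarith [sub_eq_zero.mp hc]
  have h16 : (0:ℝ) < 16 * a ^ 4 * (E - 1) ^ 2 := by
    have h4 : (0:ℝ) < a ^ 4 := by nlinarith [pow_pos (show (0:ℝ) < -a by linarith) 4]
    have hE2 : (0:ℝ) < (E - 1) ^ 2 := by
      nlinarith [mul_pos (show (0:ℝ) < 1 - E by linarith) (show (0:ℝ) < 1 - E by linarith)]
    nlinarith
  have hane : a ≠ 0 := ne_of_lt ha
  have hsq1 : (a * h * (E - 1)) ^ 2 ≤ (-2 * a * h + E - 1) ^ 2 := by nlinarith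
  have hsq2 : (-2 * a * h + E - 1) ^ 2 ≤ 4 * (a * h * (E - 1)) ^ 2 := by nlinarith
  have hK2 : (0:ℝ) ≤ K ^ 2 := sq_nonneg K
  have hσ4 : (0:ℝ) ≤ σ ^ 4 := by positivity
  constructor
  · rw [div_le_div_iff₀ (by positivity) h16]
    nlinarith [mul_le_mul_of_nonneg_left hsq1
      (by positivity : (0:ℝ) ≤ 16 * a ^ 2 * σ ^ 4 * K ^ 2)]
  · rw [div_le_div_iff₀ h16 (by positivity)]
    nlinarith [mul_le_mul_of_nonneg_left hsq2
      (by positivity : (0:ℝ) ≤ 4 * a ^ 2 * σ ^ 4 * K ^ 2)]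
end

section
/- For every real x < 0: x²/4 ≤ (−x + e^x − 1)² / (e^x − 1)² ≤ x². -/
/-!
Put `u = eˣ - 1 < 0`. The middle term is `q²` with `q = (-x + eˣ - 1)/u`, so it suffices
to show `x ≤ q ≤ x/2 < 0`. Clearing the negative denominator, the left inequality is
`eˣ (1 - x) ≤ 1`, i.e. `1 - x ≤ e⁻ˣ`, and the right one is `x (eˣ + 1) ≤ 2 (eˣ - 1)`, i.e.
`x/2 ≤ tanh (x/2)` for `x ≤ 0`; the latter holds because the difference vanishes at `0` and has
derivative `1 - eˣ (1 - x) ≥ 0`.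
-/

open Real

lemma exp_mul_one_sub_le_one (x : ℝ) : exp x * (1 - x) ≤ 1 := by
  calc exp x * (1 - x) ≤ exp x * exp (-x) := by gcongr; exact one_sub_le_exp_neg x
    _ = 1 := by rw [← exp_add, add_neg_cancel, exp_zero]

lemma mul_exp_add_one_le_two_mul_exp_sub_one {x : ℝ} (hx : x ≤ 0) :
    x * (exp x + 1) ≤ 2 * (exp x - 1) := by
  set f : ℝ → ℝ := fun y => 2 * (exp y - 1) - y * (exp y + 1)
  have hf' : ∀ y, HasDerivAt f (exp y * (1 - y) - 1) y := fun y => by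
    have := (((hasDerivAt_exp y).sub_const 1).const_mul 2).sub
      ((hasDerivAt_id y).mul ((hasDerivAt_exp y).add_const 1))
    exact this.congr_deriv (by simp only [id]; ring)
  have hf_anti : Antitone f := antitone_of_deriv_nonpos
    (fun y => (hf' y).differentiableAt)
    (fun y => by rw [(hf' y).deriv]; linarith [exp_mul_one_sub_le_one y])
  have hfx : f 0 ≤ f x := hf_anti hx
  simp only [f, exp_zero] at hfx
  linarith

lemma le_div_exp_sub_one_le_half {x : ℝ} (hx : x < 0) :
    x ≤ (-x + exp x - 1) / (exp x - 1) ∧ (-x + exp x - 1) / (exp x - 1) ≤ x / 2 := by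
  have hu : exp x - 1 < 0 := sub_neg.mpr (exp_lt_one_iff.mpr hx)
  constructor
  · rw [le_div_iff_of_neg hu]
    linarith [exp_mul_one_sub_le_one x]
  · rw [div_le_iff_of_neg hu]
    linarith [mul_exp_add_one_le_two_mul_exp_sub_one hx.le]

/-- For every real `x < 0`: `x²/4 ≤ (−x + eˣ − 1)² / (eˣ − 1)² ≤ x²`. -/
theorem stmt_5 (x : ℝ) (hx : x < 0) :
    x ^ 2 / 4 ≤ (-x + Real.exp x - 1) ^ 2 / (Real.exp x - 1) ^ 2 ∧
      (-x + Real.exp x - 1) ^ 2 / (Real.exp x - 1) ^ 2 ≤ x ^ 2 := by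
  obtain ⟨hlow, hhigh⟩ := le_div_exp_sub_one_le_half hx
  rw [← div_pow]
  constructor <;> nlinarith
end

section
/- For every real x < 0: 1/x² ≤ 1/(1 − e^x)² ≤ 1 + 2/x². -/
/-- For every real `x < 0`: `1/x² ≤ 1/(1 − eˣ)² ≤ 1 + 2/x²`. -/
theorem stmt_6 (x : ℝ) (hx : x < 0) :
    1 / x ^ 2 ≤ 1 / (1 - Real.exp x) ^ 2 ∧
      1 / (1 - Real.exp x) ^ 2 ≤ 1 + 2 / x ^ 2 := by
  have hu0 : 0 < Real.exp x := Real.exp_pos x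
  have hu1 : Real.exp x < 1 := Real.exp_lt_one_iff.mpr hx
  set u := Real.exp x with hu
  have hx0 : x ≠ 0 := hx.ne
  have hx2 : (0:ℝ) < x ^ 2 := by positivity
  have h1u : 0 < 1 - u := by linarith
  have h1u2 : 0 < (1 - u) ^ 2 := by positivity
  set p : ℝ := 1 + (-x) + (-x) ^ 2 / 2 + (-x) ^ 3 / 6 with hpdef
  have hp1 : 1 ≤ p := by
    rw [hpdef]
    nlinarith [hx, sq_nonneg x, mul_pos (mul_pos (neg_pos.mpr hx) (neg_pos.mpr hx)) (neg_pos.mpr hx)]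
  have hp0 : 0 < p := by linarith
  -- cubic lower bound on exp(-x)
  have hcub : p ≤ Real.exp (-x) := by
    have := Real.sum_le_exp_of_nonneg (x := -x) (by linarith) 4
    simpa [hpdef, Finset.sum_range_succ, Nat.factorial] using this
  have hprod : u * p ≤ 1 := by
    have h := mul_le_mul_of_nonneg_left hcub hu0.le
    rw [← Real.exp_add] at h
    simp only [add_neg_cancel, Real.exp_zero, hu] at h ⊢
    linarith
  constructor
  · -- left inequality: (1-u) ≤ -x
    have hlin : 1 + x ≤ u := by
      have := Real.add_one_le_exp x
      linarith
    have h2 : (1 - u) ^ 2 ≤ x ^ 2 := by nlinarith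
    exact one_div_le_one_div_of_le h1u2 h2
  · have step1 : x ^ 2 * (2 * u - u ^ 2) * p ^ 2 ≤ x ^ 2 * (2 * p - 1) := by
      have h : p ^ 2 * (2 * u - u ^ 2) ≤ 2 * p - 1 := by
        nlinarith [mul_nonneg (sub_nonneg.mpr hprod) (by nlinarith : (0:ℝ) ≤ 2 * p - 1 - u * p)]
      nlinarith [hx2]
    have step2 : x ^ 2 * (2 * p - 1) ≤ 2 * (p - 1) ^ 2 := by
      have hy : 0 < -x := by linarith
      rw [hpdef]
      nlinarith [sq_nonneg x, sq_nonneg (x^2), hy]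
    have step3 : 2 * (p - 1) ^ 2 ≤ 2 * (1 - u) ^ 2 * p ^ 2 := by
      have h : p - 1 ≤ (1 - u) * p := by nlinarith
      nlinarith [hp1, mul_nonneg h1u.le hp0.le]
    have key : x ^ 2 * (2 * u - u ^ 2) ≤ 2 * (1 - u) ^ 2 := by
      have hpp : (0:ℝ) < p ^ 2 := by positivity
      have := step1.trans (step2.trans step3)
      nlinarith [mul_pos hx2 hpp]
    have hfin : 1 / (1 - u) ^ 2 ≤ (x ^ 2 + 2) / x ^ 2 := by
      rw [div_le_div_iff₀ h1u2 hx2]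
      nlinarith [key]
    have hrw : (x ^ 2 + 2) / x ^ 2 = 1 + 2 / x ^ 2 := by field_simp
    linarith [hrw.le, hrw.ge]
end

section
/- Let σ > 0, a < 0, h > 0 and N ≥ 1 an integer; set T = N·h. Define m4(s,t) = (σ⁴/(4a²))(e^{2as} − 1) e^{2at} [(e^{−2as} − e^{−2at}) + 3(1 − e^{−2as})] for 0 ≤ s ≤ t. Then h² [ 2 Σ_{0 ≤ k < l ≤ N−1} m4(kh, lh) + Σ_{k=0}^{N−1} m4(kh, kh) ] = σ⁴ [ h²(e^{2aT} − 1)(8e^{2ah} + 3e^{2aT} + 1) + T²(e^{2ah} − 1)² − 2hT(e^{2ah} − 1)(e^{2ah} + 5e^{2aT}) ] / (4a²(e^{2ah} − 1)²). -/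
/-!
Writing `q = e^{2ah}`, the moment `m4(kh, lh)` for `k ≤ l` is `σ⁴/(4a²)` times the polynomial
`(q^k - 1)(3q^l - 2q^(l-k) - 1)`. Summing row `l` of the double sum only involves the geometric
sums `∑_{k<l} q^k` and `∑_{k<l} q^(l-k) = q ∑_{k<l} q^k`, so after multiplying by `(q - 1)²` each
row becomes the increment `R(l+1) - R(l)` of the numerator `R` of the right-hand side, and the
total telescopes.
-/

open Finset

section CommRing

variable {R : Type*} [CommRing R] (q : R)

/-- `m4(kh, lh) / (σ⁴/(4a²))` for `k ≤ l`, with `q = e^{2ah}`. -/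
def fourthMomentKernel (k l : ℕ) : R :=
  (q ^ k - 1) * (3 * q ^ l - 2 * q ^ (l - k) - 1)

/-- The numerator of the right-hand side is `σ⁴ h² · fourthMomentNumerator (e^{2ah}) N`, as `T = N h`. -/
def fourthMomentNumerator (N : ℕ) : R :=
  (q ^ N - 1) * (8 * q + 3 * q ^ N + 1) + (N : R) ^ 2 * (q - 1) ^ 2 -
    2 * N * (q - 1) * (q + 5 * q ^ N)

theorem fourthMomentKernel_self (k : ℕ) : fourthMomentKernel q k k = 3 * (q ^ k - 1) ^ 2 := by
  simp only [fourthMomentKernel, Nat.sub_self, pow_zero]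
  ring

theorem sum_range_pow_sub (n : ℕ) : ∑ k ∈ range n, q ^ (n - k) = q * ∑ k ∈ range n, q ^ k := by
  rw [mul_sum, ← sum_range_reflect]
  refine sum_congr rfl fun k hk => ?_
  rw [← pow_succ']
  congr 1
  have := mem_range.mp hk
  omega

theorem sub_one_mul_sum_fourthMomentKernel (n : ℕ) :
    (q - 1) * ∑ k ∈ range n, fourthMomentKernel q k n =
      (q ^ n - 1) * (3 * q ^ n + 2 * q - 1) - n * (q - 1) * (5 * q ^ n - 1) := by
  have hterm : ∀ k ∈ range n, fourthMomentKernel q k n =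
      3 * q ^ n * q ^ k - 5 * q ^ n - q ^ k + 2 * q ^ (n - k) + 1 := by
    intro k hk
    have hsplit : q ^ n = q ^ k * q ^ (n - k) := by
      rw [← pow_add, Nat.add_sub_cancel' (mem_range.mp hk).le]
    rw [fourthMomentKernel, hsplit]
    ring
  rw [sum_congr rfl hterm]
  simp only [sum_add_distrib, sum_sub_distrib, ← mul_sum, sum_const, card_range, nsmul_eq_mul,
    mul_one, sum_range_pow_sub]
  linear_combination (3 * q ^ n - 1 + 2 * q) * geom_sum_mul q n

theorem sub_one_sq_mul_sum_fourthMomentKernel (N : ℕ) :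
    (q - 1) ^ 2 * (2 * ∑ l ∈ range N, ∑ k ∈ range l, fourthMomentKernel q k l +
        ∑ k ∈ range N, fourthMomentKernel q k k) = fourthMomentNumerator q N := by
  rw [mul_sum, ← sum_add_distrib, mul_sum]
  refine sum_range_induction _ _ (by simp [fourthMomentNumerator]) N fun n _ => ?_
  rw [fourthMomentKernel_self]
  simp only [fourthMomentNumerator]
  push_cast
  linear_combination -2 * (q - 1) * sub_one_mul_sum_fourthMomentKernel q n

end CommRing

theorem m4_eq_fourthMomentKernel {σ a h : ℝ} (hh : 0 < h) {m4 : ℝ → ℝ → ℝ}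
    (hm4 : ∀ s t : ℝ, 0 ≤ s → s ≤ t →
      m4 s t = σ ^ 4 / (4 * a ^ 2) * (Real.exp (2 * a * s) - 1) * Real.exp (2 * a * t) *
        ((Real.exp (-2 * a * s) - Real.exp (-2 * a * t)) +
          3 * (1 - Real.exp (-2 * a * s))))
    {k l : ℕ} (hkl : k ≤ l) :
    m4 (k * h) (l * h) =
      σ ^ 4 / (4 * a ^ 2) * fourthMomentKernel (Real.exp (2 * a * h)) k l := by
  have hexp : ∀ j : ℕ, Real.exp (2 * a * (j * h)) = Real.exp (2 * a * h) ^ j := fun j => by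
    rw [← Real.exp_nat_mul]
    ring_nf
  have hexp_neg : ∀ j : ℕ, Real.exp (-2 * a * (j * h)) = (Real.exp (2 * a * h) ^ j)⁻¹ :=
    fun j => by rw [← hexp, ← Real.exp_neg]; ring_nf
  have hle : (k : ℝ) * h ≤ l * h := by gcongr
  rw [hm4 _ _ (by positivity) hle, fourthMomentKernel, hexp, hexp, hexp_neg, hexp_neg,
    ← Nat.add_sub_cancel' hkl, pow_add, Nat.add_sub_cancel_left]
  field_simp
  ring

theorem stmt_11_general (σ a h : ℝ) (N : ℕ) (ha : a < 0) (hh : 0 < h)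
    (m4 : ℝ → ℝ → ℝ)
    (hm4 : ∀ s t : ℝ, 0 ≤ s → s ≤ t →
      m4 s t = σ ^ 4 / (4 * a ^ 2) * (Real.exp (2 * a * s) - 1) * Real.exp (2 * a * t) *
        ((Real.exp (-2 * a * s) - Real.exp (-2 * a * t)) +
          3 * (1 - Real.exp (-2 * a * s)))) :
    h ^ 2 * (2 * ∑ l ∈ Finset.range N, ∑ k ∈ Finset.range l, m4 (k * h) (l * h) +
        ∑ k ∈ Finset.range N, m4 (k * h) (k * h)) =
      σ ^ 4 * (h ^ 2 * (Real.exp (2 * a * (N * h)) - 1) *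
            (8 * Real.exp (2 * a * h) + 3 * Real.exp (2 * a * (N * h)) + 1) +
          (N * h) ^ 2 * (Real.exp (2 * a * h) - 1) ^ 2 -
          2 * h * (N * h) * (Real.exp (2 * a * h) - 1) *
            (Real.exp (2 * a * h) + 5 * Real.exp (2 * a * (N * h)))) /
        (4 * a ^ 2 * (Real.exp (2 * a * h) - 1) ^ 2) := by
  set q := Real.exp (2 * a * h)
  have hq : q - 1 ≠ 0 := sub_ne_zero.mpr fun h1 => by
    rw [Real.exp_eq_one_iff] at h1
    nlinarith
  have hqN : Real.exp (2 * a * (N * h)) = q ^ N := by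
    rw [← Real.exp_nat_mul]
    ring_nf
  have hoff : ∑ l ∈ range N, ∑ k ∈ range l, m4 (k * h) (l * h) =
      σ ^ 4 / (4 * a ^ 2) * ∑ l ∈ range N, ∑ k ∈ range l, fourthMomentKernel q k l := by
    simp only [mul_sum]
    exact sum_congr rfl fun l _ => sum_congr rfl fun k hk =>
      m4_eq_fourthMomentKernel hh hm4 (mem_range.mp hk).le
  have hdiag : ∑ k ∈ range N, m4 (k * h) (k * h) =
      σ ^ 4 / (4 * a ^ 2) * ∑ k ∈ range N, fourthMomentKernel q k k := by
    rw [mul_sum]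
    exact sum_congr rfl fun k _ => m4_eq_fourthMomentKernel hh hm4 le_rfl
  have hsum := eq_div_of_mul_eq (pow_ne_zero 2 hq)
    ((mul_comm _ _).trans (sub_one_sq_mul_sum_fourthMomentKernel q N))
  have ha0 : a ≠ 0 := ha.ne
  rw [hoff, hdiag, hqN, mul_left_comm 2, ← mul_add, hsum, fourthMomentNumerator]
  field_simp

/-- The nested geometric-sum identity in the proof of Theorem 3.1: with
`m4(s,t) = (σ⁴/(4a²))(e^{2as} − 1)e^{2at}[(e^{−2as} − e^{−2at}) + 3(1 − e^{−2as})]`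
for `0 ≤ s ≤ t`, `T = N·h`, we have
`h²[2 Σ_{0 ≤ k < l ≤ N−1} m4(kh, lh) + Σ_{k=0}^{N−1} m4(kh, kh)]
 = σ⁴[h²(e^{2aT}−1)(8e^{2ah}+3e^{2aT}+1) + T²(e^{2ah}−1)² − 2hT(e^{2ah}−1)(e^{2ah}+5e^{2aT})]
    / (4a²(e^{2ah}−1)²)`. -/
theorem stmt_11 (σ a h : ℝ) (N : ℕ) (hσ : 0 < σ) (ha : a < 0) (hh : 0 < h) (hN : 1 ≤ N)
    (m4 : ℝ → ℝ → ℝ)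
    (hm4 : ∀ s t : ℝ, 0 ≤ s → s ≤ t →
      m4 s t = σ ^ 4 / (4 * a ^ 2) * (Real.exp (2 * a * s) - 1) * Real.exp (2 * a * t) *
        ((Real.exp (-2 * a * s) - Real.exp (-2 * a * t)) +
          3 * (1 - Real.exp (-2 * a * s)))) :
    h ^ 2 * (2 * ∑ l ∈ Finset.range N, ∑ k ∈ Finset.range l, m4 (k * h) (l * h) +
        ∑ k ∈ Finset.range N, m4 (k * h) (k * h)) =
      σ ^ 4 * (h ^ 2 * (Real.exp (2 * a * (N * h)) - 1) *
            (8 * Real.exp (2 * a * h) + 3 * Real.exp (2 * a * (N * h)) + 1) +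
          (N * h) ^ 2 * (Real.exp (2 * a * h) - 1) ^ 2 -
          2 * h * (N * h) * (Real.exp (2 * a * h) - 1) *
            (Real.exp (2 * a * h) + 5 * Real.exp (2 * a * (N * h)))) /
        (4 * a ^ 2 * (Real.exp (2 * a * h) - 1) ^ 2) :=
  stmt_11_general σ a h N ha hh m4 hm4
end

section
/- For all real a < 0 and T > 0: 4aT − e^{4aT} + e^{2aT}(8aT − 4) + 5 < 0. -/
/-!
With `u = 2aT < 0` the left-hand side is `F u = 2u - e^{2u} + e^u (4u - 4) + 5`.
Now `F 0 = 0` and `F' u = 4 e^u (u - sinh u)`, which is positive for `u < 0` since `sinh u < u`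
there; so `F` is strictly increasing on `(-∞, 0]` and negative on `(-∞, 0)`.
-/

open Real Set

lemma hasDerivAt_two_mul_sub_exp_two_mul_add_exp_mul (x : ℝ) :
    HasDerivAt (fun u => 2 * u - exp (2 * u) + exp u * (4 * u - 4) + 5)
      (4 * exp x * (x - sinh x)) x := by
  have hlin : HasDerivAt (fun u : ℝ => 2 * u) 2 x := by
    simpa using (hasDerivAt_id x).const_mul 2
  have hexp2 : HasDerivAt (fun u => exp (2 * u)) (exp (2 * x) * 2) x :=
    (hasDerivAt_exp (2 * x)).comp x hlin
  have hprod : HasDerivAt (fun u => exp u * (4 * u - 4)) (exp x * (4 * x - 4) + exp x * 4) x :=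
    (hasDerivAt_exp x).mul (by simpa using ((hasDerivAt_id x).const_mul 4).sub_const 4)
  refine (((hlin.sub hexp2).add hprod).add_const 5).congr_deriv ?_
  have hexp : exp x * exp (-x) = 1 := by rw [← exp_add]; simp
  rw [sinh_eq, show 2 * x = x + x by ring, exp_add]
  linear_combination -2 * hexp

lemma two_mul_sub_exp_two_mul_add_exp_mul_lt_zero {u : ℝ} (hu : u < 0) :
    2 * u - exp (2 * u) + exp u * (4 * u - 4) + 5 < 0 := by
  have hmono : StrictMonoOn (fun u => 2 * u - exp (2 * u) + exp u * (4 * u - 4) + 5) (Iic 0) :=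
    strictMonoOn_of_hasDerivWithinAt_pos (convex_Iic 0)
      (fun x _ => (hasDerivAt_two_mul_sub_exp_two_mul_add_exp_mul x).continuousAt.continuousWithinAt)
      (fun x _ => (hasDerivAt_two_mul_sub_exp_two_mul_add_exp_mul x).hasDerivWithinAt)
      (fun x hx => by
        rw [interior_Iic] at hx
        exact mul_pos (by positivity) (sub_pos.2 (sinh_lt_self_iff.2 hx)))
  have h := hmono (mem_Iic.2 hu.le) (mem_Iic.2 le_rfl) hu
  norm_num at h
  linarith

/-- For all real `a < 0` and `T > 0`: `4aT − e^{4aT} + e^{2aT}(8aT − 4) + 5 < 0`. -/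
theorem stmt_13 (a T : ℝ) (ha : a < 0) (hT : 0 < T) :
    4 * a * T - Real.exp (4 * a * T) + Real.exp (2 * a * T) * (8 * a * T - 4) + 5 < 0 := by
  have hu : 2 * a * T < 0 := mul_neg_of_neg_of_pos (by linarith) hT
  convert two_mul_sub_exp_two_mul_add_exp_mul_lt_zero hu using 3 <;> ring_nf
end

section
/- For all real a < 0 and γ ∈ (0,1), the improper double integral ∫_0^∞ ∫_0^∞ γ^{s+t} e^{2a(s+t)} (1 − e^{−2a·min(s,t)})² ds dt converges and equals 2a² / (log(γ) · (a + log(γ)) · (2a + log(γ))²). -/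
/-!
Write `λ = log γ`, `β = 2a + λ`, `m = min s t`, `M = max s t`. Since `s + t = m + M`,
expanding the square turns the integrand into `e^{βm+βM} - 2 e^{λm+βM} + e^{(λ-2a)m+βM}`.
Over the quadrant, `∫∫ e^{αm+βM} = 2/(β(α+β))` whenever `β < 0` and `α + β < 0`: by Fubini,
the inner integral in `t` splits at `t = s` into `e^{βs} ∫₀ˢ e^{αt} dt` and `-e^{(α+β)s}/β`,
and both pieces integrate to `1/(β(α+β))`. Summing the three contributions gives the value.
-/

open MeasureTheory Set Real

lemma integrableOn_Ioi_mul_exp_mul {β : ℝ} (hβ : β < 0) :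
    IntegrableOn (fun x : ℝ => x * exp (β * x)) (Ioi 0) := by
  refine (integrableOn_rpow_mul_exp_neg_mul_rpow (s := 1) (p := 1) (by norm_num) one_pos
    (neg_pos.2 hβ)).congr_fun (fun x _ => ?_) measurableSet_Ioi
  simp

lemma integral_Ioi_mul_exp_mul {β : ℝ} (hβ : β < 0) :
    ∫ x in Ioi 0, x * exp (β * x) = 1 / β ^ 2 := by
  have h := integral_rpow_mul_exp_neg_mul_Ioi two_pos (neg_pos.2 hβ)
  norm_num [Real.Gamma_two] at h
  simpa [div_pow] using h

lemma intervalIntegral_exp_mul {α : ℝ} (hα : α ≠ 0) (s : ℝ) :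
    ∫ t in (0 : ℝ)..s, exp (α * t) = (exp (α * s) - 1) / α := by
  rw [intervalIntegral.integral_comp_mul_left (fun t => exp t) hα, integral_exp]
  simp [div_eq_inv_mul]

lemma integrableOn_and_integral_exp_mul_mul_intervalIntegral_exp_mul {α β : ℝ}
    (hβ : β < 0) (hαβ : α + β < 0) :
    IntegrableOn (fun s => exp (β * s) * ∫ t in (0 : ℝ)..s, exp (α * t)) (Ioi 0) ∧
      ∫ s in Ioi 0, exp (β * s) * (∫ t in (0 : ℝ)..s, exp (α * t)) = 1 / (β * (α + β)) := by
  rcases eq_or_ne α 0 with rfl | hα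
  · have h : (fun s => exp (β * s) * ∫ t in (0 : ℝ)..s, exp (0 * t)) =
        fun s => s * exp (β * s) := by
      ext s; simp [mul_comm]
    rw [h, integral_Ioi_mul_exp_mul hβ, zero_add, ← sq]
    exact ⟨integrableOn_Ioi_mul_exp_mul hβ, rfl⟩
  · have h : (fun s => exp (β * s) * ∫ t in (0 : ℝ)..s, exp (α * t)) =
        fun s => α⁻¹ * exp ((α + β) * s) - α⁻¹ * exp (β * s) := by
      ext s
      rw [intervalIntegral_exp_mul hα, add_mul, exp_add]
      ring
    have hint₁ := (integrableOn_exp_mul_Ioi hαβ 0).const_mul α⁻¹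
    have hint₂ := (integrableOn_exp_mul_Ioi hβ 0).const_mul α⁻¹
    rw [h, integral_sub hint₁ hint₂, integral_const_mul, integral_const_mul,
      integral_exp_mul_Ioi hαβ, integral_exp_mul_Ioi hβ]
    refine ⟨hint₁.sub hint₂, ?_⟩
    simp only [mul_zero, exp_zero]
    field_simp [hβ.ne, hαβ.ne]
    ring

lemma integral_Ioi_exp_mul_min_add_mul_max {β : ℝ} (hβ : β < 0) (α : ℝ) {s : ℝ}
    (hs : 0 ≤ s) :
    ∫ t in Ioi 0, exp (α * min s t + β * max s t) =
      exp (β * s) * (∫ t in (0 : ℝ)..s, exp (α * t)) - exp ((α + β) * s) / β := by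
  have hcont : Continuous fun t => exp (α * min s t + β * max s t) := by fun_prop
  have hle : EqOn (fun t => exp (α * min s t + β * max s t))
      (fun t => exp (β * s) * exp (α * t)) (Ioc 0 s) := fun t ht => by
    simp only [min_eq_right ht.2, max_eq_left ht.2, ← exp_add, add_comm]
  have hgt : EqOn (fun t => exp (α * min s t + β * max s t))
      (fun t => exp (α * s) * exp (β * t)) (Ioi s) := fun t ht => by
    simp only [min_eq_left (le_of_lt ht.out), max_eq_right (le_of_lt ht.out), ← exp_add]
  have hint_gt : IntegrableOn (fun t => exp (α * min s t + β * max s t)) (Ioi s) :=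
    IntegrableOn.congr_fun ((integrableOn_exp_mul_Ioi hβ s).const_mul _) hgt.symm
      measurableSet_Ioi
  rw [← Ioc_union_Ioi_eq_Ioi hs,
    setIntegral_union (Ioc_disjoint_Ioi le_rfl) measurableSet_Ioi hcont.integrableOn_Ioc hint_gt,
    setIntegral_congr_fun measurableSet_Ioc hle,
    setIntegral_congr_fun measurableSet_Ioi hgt, integral_const_mul, integral_const_mul,
    intervalIntegral.integral_of_le hs, integral_exp_mul_Ioi hβ, add_mul, exp_add]
  ring

lemma integrableOn_exp_mul_min_add_mul_max {α β : ℝ} (hβ : β < 0) (hαβ : α + β < 0) :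
    IntegrableOn (fun p : ℝ × ℝ => exp (α * min p.1 p.2 + β * max p.1 p.2))
      (Ioi 0 ×ˢ Ioi 0) := by
  -- `αm + βM = (α+β)m + β(M-m) ≤ c(m+M)` for `m ≤ M` with `m ≥ 0`
  set c := max β ((α + β) / 2)
  have hc : c < 0 := max_lt hβ (by linarith)
  have hdom : IntegrableOn (fun p : ℝ × ℝ => exp (c * p.1) * exp (c * p.2))
      (Ioi 0 ×ˢ Ioi 0) := by
    rw [IntegrableOn, Measure.volume_eq_prod, ← Measure.prod_restrict]
    exact (integrableOn_exp_mul_Ioi hc 0).mul_prod (integrableOn_exp_mul_Ioi hc 0)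
  refine hdom.mono' (by fun_prop)
    (ae_restrict_of_forall_mem (measurableSet_Ioi.prod measurableSet_Ioi) fun p hp => ?_)
  have hmin : 0 ≤ min p.1 p.2 := le_min hp.1.out.le hp.2.out.le
  have hsum := min_add_max p.1 p.2
  rw [Real.norm_of_nonneg (exp_pos _).le, ← exp_add, exp_le_exp]
  nlinarith [le_max_left β ((α + β) / 2), le_max_right β ((α + β) / 2),
    min_le_max (a := p.1) (b := p.2)]

lemma integral_exp_mul_min_add_mul_max {α β : ℝ} (hβ : β < 0) (hαβ : α + β < 0) :
    ∫ p in Ioi (0 : ℝ) ×ˢ Ioi (0 : ℝ), exp (α * min p.1 p.2 + β * max p.1 p.2) =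
      2 / (β * (α + β)) := by
  have hint := integrableOn_exp_mul_min_add_mul_max hβ hαβ
  rw [Measure.volume_eq_prod] at hint ⊢
  rw [setIntegral_prod _ hint, setIntegral_congr_fun measurableSet_Ioi
    fun s hs => integral_Ioi_exp_mul_min_add_mul_max hβ α (le_of_lt hs.out)]
  obtain ⟨hint₁, hval₁⟩ :=
    integrableOn_and_integral_exp_mul_mul_intervalIntegral_exp_mul hβ hαβ
  rw [integral_sub hint₁ ((integrableOn_exp_mul_Ioi hαβ 0).div_const β), hval₁,
    integral_div, integral_exp_mul_Ioi hαβ, mul_zero, exp_zero]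
  field_simp [hβ.ne, hαβ.ne]
  ring

lemma exp_mul_one_sub_exp_sq (u v : ℝ) :
    exp u * (1 - exp v) ^ 2 = exp u - 2 * exp (u + v) + exp (u + 2 * v) := by
  rw [show u + 2 * v = u + v + v by ring]
  simp only [exp_add]
  ring

lemma rpow_mul_exp_mul_one_sub_exp_min_sq {γ : ℝ} (hγ : 0 < γ) (a s t : ℝ) :
    γ ^ (s + t) * exp (2 * a * (s + t)) * (1 - exp (-2 * a * min s t)) ^ 2 =
      exp ((2 * a + log γ) * min s t + (2 * a + log γ) * max s t)
        - 2 * exp (log γ * min s t + (2 * a + log γ) * max s t)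
        + exp ((log γ - 2 * a) * min s t + (2 * a + log γ) * max s t) := by
  rw [rpow_def_of_pos hγ, ← exp_add, exp_mul_one_sub_exp_sq, ← min_add_max s t]
  ring_nf

/-- For `a < 0` and `γ ∈ (0,1)`, the improper double integral
`∫_0^∞ ∫_0^∞ γ^{s+t} e^{2a(s+t)} (1 − e^{−2a·min(s,t)})² ds dt`
converges and equals `2a²/(log γ · (a + log γ) · (2a + log γ)²)`. -/
theorem stmt_15 (a γ : ℝ) (ha : a < 0) (hγ0 : 0 < γ) (hγ1 : γ < 1) :
    IntegrableOn
        (fun p : ℝ × ℝ => γ ^ (p.1 + p.2) * Real.exp (2 * a * (p.1 + p.2)) *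
          (1 - Real.exp (-2 * a * min p.1 p.2)) ^ 2)
        (Set.Ioi 0 ×ˢ Set.Ioi 0) ∧
      ∫ p in Set.Ioi (0 : ℝ) ×ˢ Set.Ioi (0 : ℝ),
          γ ^ (p.1 + p.2) * Real.exp (2 * a * (p.1 + p.2)) *
            (1 - Real.exp (-2 * a * min p.1 p.2)) ^ 2 =
        2 * a ^ 2 / (Real.log γ * (a + Real.log γ) * (2 * a + Real.log γ) ^ 2) := by
  have hL : log γ < 0 := log_neg hγ0 hγ1
  have hβ : 2 * a + log γ < 0 := by linarith
  have haL : a + log γ < 0 := by linarith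
  have hQ : MeasurableSet (Ioi (0 : ℝ) ×ˢ Ioi (0 : ℝ)) :=
    measurableSet_Ioi.prod measurableSet_Ioi
  have hexpand := fun p : ℝ × ℝ => rpow_mul_exp_mul_one_sub_exp_min_sq hγ0 a p.1 p.2
  have i₁ := integrableOn_exp_mul_min_add_mul_max (α := 2 * a + log γ) hβ (by linarith)
  have i₂ := (integrableOn_exp_mul_min_add_mul_max (α := log γ) hβ (by linarith)).const_mul 2
  have i₃ := integrableOn_exp_mul_min_add_mul_max (α := log γ - 2 * a) hβ (by linarith)
  refine ⟨IntegrableOn.congr_fun ((i₁.sub' i₂).add i₃) (fun p _ => (hexpand p).symm) hQ, ?_⟩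
  rw [setIntegral_congr_fun hQ fun p _ => hexpand p, integral_add (i₁.sub' i₂) i₃,
    integral_sub i₁ i₂, integral_const_mul, integral_exp_mul_min_add_mul_max hβ (by linarith),
    integral_exp_mul_min_add_mul_max hβ (by linarith),
    integral_exp_mul_min_add_mul_max hβ (by linarith),
    show 2 * a + log γ + (2 * a + log γ) = 2 * (2 * a + log γ) by ring,
    show log γ + (2 * a + log γ) = 2 * (a + log γ) by ring,
    show log γ - 2 * a + (2 * a + log γ) = 2 * log γ by ring]
  field_simp [hL.ne, hβ.ne, haL.ne]
  ring
end

section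
/- Fix σ > 0, h > 0, T > 0 and B > 0. Then the limit as a → 0 from the left of E1(h, T, a) + E2(h, T, a)/B exists and equals (σ⁴T²/4)·h² + (σ⁴T⁵/3)·1/(hB) + σ⁴T²(−2T² + 2hT − h²)/(3B), where E1(h,T,a) = σ⁴(−2ah + e^{2ah} − 1)²(e^{2aT} − 1)² / (16a⁴(e^{2ah} − 1)²) and E2(h,T,a) = σ⁴T[h(e^{2aT} − 1)(4e^{2ah} + e^{2aT} + 1) − (e^{2ah} − 1)(e^{2ah} + 4e^{2aT} + 1)T] / (2a²(e^{2ah} − 1)²). -/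
/-!
Write `p = exp (2ah)`, `q = exp (2aT)`. Then
`E1 = σ⁴/16 · ((p - 1 - 2ah)/a²)² ((q - 1)/a)² / ((p - 1)/a)²`, and each quotient tends to a
Taylor coefficient of `exp`. The numerator of `E2` is the exponential polynomial
`4(h - T) pq + h q² - T p² - 4h p + 4T q - (h - T) = ∑ cᵢ exp (dᵢ a)` whose moments
`∑ cᵢ dᵢᵏ` vanish for `k < 4`; so its Taylor expansion starts at `a⁴ ∑ cᵢ dᵢ⁴ / 4!`, which is
exactly what the denominator `2a² (p - 1)² ~ 8h² a⁴` needs.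
-/

open Filter Real Finset Topology Asymptotics Nat

lemma Real.exp_mul_sub_sum_range_succ_isLittleO_pow (d : ℝ) (n : ℕ) :
    (fun x ↦ exp (d * x) - ∑ i ∈ range (n + 1), (d * x) ^ i / i !) =o[𝓝 0] (· ^ n) := by
  have hd : Tendsto (fun x : ℝ ↦ d * x) (𝓝 0) (𝓝 0) := by
    simpa using (continuous_const_mul d).tendsto 0
  refine ((exp_sub_sum_range_succ_isLittleO_pow n).comp_tendsto hd).trans_isBigO ?_
  simpa only [Function.comp_def, mul_pow] using
    (isBigO_refl (· ^ n) (𝓝 (0 : ℝ))).const_mul_left (d ^ n)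

lemma tendsto_div_pow_nhdsNE_of_isLittleO {f : ℝ → ℝ} {L : ℝ} {n : ℕ}
    (h : (fun x ↦ f x - L * x ^ n) =o[𝓝 0] (· ^ n)) :
    Tendsto (fun x ↦ f x / x ^ n) (𝓝[≠] 0) (𝓝 L) := by
  have h0 := (h.tendsto_div_nhds_zero.mono_left (nhdsWithin_le_nhds (s := {0}ᶜ))).add_const L
  rw [zero_add] at h0
  refine h0.congr' ?_
  filter_upwards [self_mem_nhdsWithin] with x (hx : x ≠ 0)
  field_simp
  ring

lemma tendsto_sum_mul_exp_div_pow {ι : Type*} (s : Finset ι) (c d : ι → ℝ) (n : ℕ)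
    (hmoment : ∀ k < n, ∑ i ∈ s, c i * d i ^ k = 0) :
    Tendsto (fun x ↦ (∑ i ∈ s, c i * exp (d i * x)) / x ^ n) (𝓝[≠] 0)
      (𝓝 ((∑ i ∈ s, c i * d i ^ n) / n !)) := by
  apply tendsto_div_pow_nhdsNE_of_isLittleO
  have hsum : (fun x ↦ ∑ i ∈ s, c i * (exp (d i * x) - ∑ k ∈ range (n + 1), (d i * x) ^ k / k !))
      =o[𝓝 0] (· ^ n) :=
    IsLittleO.fun_sum fun i _ ↦
      (exp_mul_sub_sum_range_succ_isLittleO_pow (d i) n).const_mul_left (c i)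
  refine hsum.congr_left fun x ↦ ?_
  have htaylor : ∑ i ∈ s, c i * ∑ k ∈ range (n + 1), (d i * x) ^ k / k !
      = (∑ i ∈ s, c i * d i ^ n) / n ! * x ^ n := calc
    _ = ∑ k ∈ range (n + 1), (∑ i ∈ s, c i * d i ^ k) * (x ^ k / k !) := by
      simp_rw [mul_sum, sum_mul]
      rw [sum_comm]
      exact sum_congr rfl fun _ _ ↦ sum_congr rfl fun _ _ ↦ by ring
    _ = (∑ i ∈ s, c i * d i ^ n) * (x ^ n / n !) := by
      rw [sum_range_succ, sum_eq_zero fun k hk ↦ by rw [hmoment k (mem_range.1 hk), zero_mul],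
        zero_add]
    _ = _ := by ring
  simp only [mul_sub, sum_sub_distrib, htaylor]

lemma tendsto_exp_mul_sub_one_div (d : ℝ) :
    Tendsto (fun x ↦ (exp (d * x) - 1) / x) (𝓝[≠] 0) (𝓝 d) := by
  simpa using tendsto_div_pow_nhdsNE_of_isLittleO (f := fun x ↦ exp (d * x) - 1) (L := d) (n := 1)
    (by simpa [sum_range_succ, sub_sub] using exp_mul_sub_sum_range_succ_isLittleO_pow d 1)

lemma tendsto_exp_mul_sub_one_sub_div_sq (d : ℝ) :
    Tendsto (fun x ↦ (exp (d * x) - 1 - d * x) / x ^ 2) (𝓝[≠] 0) (𝓝 (d ^ 2 / 2)) := by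
  refine tendsto_div_pow_nhdsNE_of_isLittleO ?_
  refine (exp_mul_sub_sum_range_succ_isLittleO_pow d 2).congr_left fun x ↦ ?_
  simp only [sum_range_succ, sum_range_zero, factorial, pow_zero, pow_one]
  push_cast
  ring

lemma tendsto_mse_numerator_div_pow_four (h T : ℝ) :
    Tendsto (fun a ↦ (h * (exp (2 * a * T) - 1) * (4 * exp (2 * a * h) + exp (2 * a * T) + 1) -
        (exp (2 * a * h) - 1) * (exp (2 * a * h) + 4 * exp (2 * a * T) + 1) * T) / a ^ 4)
      (𝓝[≠] 0) (𝓝 (8 / 3 * h * T * (T ^ 3 - 2 * h * T ^ 2 + 2 * h ^ 2 * T - h ^ 3))) := by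
  have hmoment : ∀ k < 4, ∑ i, ![4 * (h - T), h, -T, -4 * h, 4 * T, -(h - T)] i *
      ![2 * (h + T), 4 * T, 4 * h, 2 * h, 2 * T, 0] i ^ k = 0 := by
    intro k hk
    interval_cases k <;> simp only [Fin.sum_univ_six, Matrix.cons_val, pow_zero] <;> ring
  convert tendsto_sum_mul_exp_div_pow univ _ _ 4 hmoment using 1
  · funext a
    have hprod : exp (2 * (h + T) * a) = exp (2 * a * h) * exp (2 * a * T) := by
      rw [← exp_add]; ring_nf
    have hsq (c : ℝ) : exp (4 * c * a) = exp (2 * a * c) ^ 2 := by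
      rw [sq, ← exp_add]; ring_nf
    have hcomm (c : ℝ) : exp (2 * c * a) = exp (2 * a * c) := by ring_nf
    simp only [Fin.sum_univ_six, Matrix.cons_val, hprod, hsq, hcomm, zero_mul, exp_zero]
    ring
  · rw [Fin.sum_univ_six, show ((4 ! : ℕ) : ℝ) = 24 by rfl]
    congr 1
    simp only [Matrix.cons_val]
    ring

theorem stmt_17_general (σ h T B : ℝ) (hh : 0 < h) :
    Filter.Tendsto
      (fun a : ℝ =>
        σ ^ 4 * (-2 * a * h + Real.exp (2 * a * h) - 1) ^ 2 *
            (Real.exp (2 * a * T) - 1) ^ 2 /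
          (16 * a ^ 4 * (Real.exp (2 * a * h) - 1) ^ 2) +
        σ ^ 4 * T * (h * (Real.exp (2 * a * T) - 1) *
              (4 * Real.exp (2 * a * h) + Real.exp (2 * a * T) + 1) -
            (Real.exp (2 * a * h) - 1) *
              (Real.exp (2 * a * h) + 4 * Real.exp (2 * a * T) + 1) * T) /
          (2 * a ^ 2 * (Real.exp (2 * a * h) - 1) ^ 2) / B)
      (nhdsWithin 0 (Set.Iio 0))
      (nhds (σ ^ 4 * T ^ 2 / 4 * h ^ 2 + σ ^ 4 * T ^ 5 / 3 * (1 / (h * B)) +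
        σ ^ 4 * T ^ 2 * (-2 * T ^ 2 + 2 * h * T - h ^ 2) / (3 * B))) := by
  have hAh := tendsto_exp_mul_sub_one_div (2 * h)
  have hAT := tendsto_exp_mul_sub_one_div (2 * T)
  have hC := tendsto_exp_mul_sub_one_sub_div_sq (2 * h)
  have hN := tendsto_mse_numerator_div_pow_four h T
  have hh2 : (2 * h) ^ 2 ≠ 0 := by positivity
  have hlim := ((((hC.pow 2).mul (hAT.pow 2)).div (hAh.pow 2) hh2).const_mul (σ ^ 4 / 16)).add
    (((hN.const_mul (σ ^ 4 * T / 2)).div (hAh.pow 2) hh2).div_const B)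
  convert (hlim.mono_left (nhdsLT_le_nhdsNE 0)).congr' ?_ using 2
  · field_simp
    ring
  · filter_upwards [self_mem_nhdsWithin] with a (ha : a < 0)
    have hp : exp (2 * a * h) - 1 ≠ 0 := by
      rw [sub_ne_zero, Ne, exp_eq_one_iff]
      nlinarith
    have hcomm (c : ℝ) : exp (2 * c * a) = exp (2 * a * c) := by ring_nf
    simp only [Pi.div_apply, hcomm]
    field_simp
    ring

/-- Continuity of the exact finite-horizon undiscounted MSE at `a = 0`:
for fixed `σ, h, T, B > 0`, the limit as `a → 0⁻` of `E1(h,T,a) + E2(h,T,a)/B`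
exists and equals `(σ⁴T²/4)h² + (σ⁴T⁵/3)/(hB) + σ⁴T²(−2T² + 2hT − h²)/(3B)`. -/
theorem stmt_17 (σ h T B : ℝ) (hσ : 0 < σ) (hh : 0 < h) (hT : 0 < T) (hB : 0 < B) :
    Filter.Tendsto
      (fun a : ℝ =>
        σ ^ 4 * (-2 * a * h + Real.exp (2 * a * h) - 1) ^ 2 *
            (Real.exp (2 * a * T) - 1) ^ 2 /
          (16 * a ^ 4 * (Real.exp (2 * a * h) - 1) ^ 2) +
        σ ^ 4 * T * (h * (Real.exp (2 * a * T) - 1) *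
              (4 * Real.exp (2 * a * h) + Real.exp (2 * a * T) + 1) -
            (Real.exp (2 * a * h) - 1) *
              (Real.exp (2 * a * h) + 4 * Real.exp (2 * a * T) + 1) * T) /
          (2 * a ^ 2 * (Real.exp (2 * a * h) - 1) ^ 2) / B)
      (nhdsWithin 0 (Set.Iio 0))
      (nhds (σ ^ 4 * T ^ 2 / 4 * h ^ 2 + σ ^ 4 * T ^ 5 / 3 * (1 / (h * B)) +
        σ ^ 4 * T ^ 2 * (-2 * T ^ 2 + 2 * h * T - h ^ 2) / (3 * B))) :=
  stmt_17_general σ h T B hh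
end
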